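/- arXiv:1610.05203 — 2 statements merged into one kernel-verified Lean document; each statement's English description precedes it below -/
import Mathlib

section
/- Let α>0 with α∉{1,2} and let ψ:ℝ→ℝ be a smooth function supported in [1/2,2]. Set λ=α/4. Then there is a constant C depending only on α and ψ such that for all ξ,w∈ℝ, all 0<h≤1 and all integers l>0, | ∫_ℝ e^{i(wη + 2^{αl} η^α − 2^{αl} (hη−ξ)^α)} (ψ(η)/η) (ψ(hη−ξ)/(hη−ξ)) dη | ≤ C ( 𝟙_{[−2^{−λl}, 2^{−λl}]}(ξ) + 2^{−λl} 𝟙_{[−2,2]}(ξ) ). -/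
open MeasureTheory Set intervalIntegral

lemma norm_exp_I_mul (x : ℝ) : ‖Complex.exp (Complex.I * x)‖ = 1 := by
  rw [mul_comm]; exact Complex.norm_exp_ofReal_mul_I x

lemma ftc_lb {F F' : ℝ → ℝ} {c d κ : ℝ} (hcd : c ≤ d)
    (hF : ∀ t ∈ Icc c d, HasDerivAt F (F' t) t) (hF' : ContinuousOn F' (Icc c d))
    (hκ : ∀ t ∈ Icc c d, κ ≤ F' t) : κ * (d - c) ≤ F d - F c := by
  have huIcc : uIcc c d = Icc c d := uIcc_of_le hcd
  have hint : IntervalIntegrable F' volume c d :=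
    (hF'.mono (by rw [huIcc])).intervalIntegrable
  have := intervalIntegral.integral_eq_sub_of_hasDerivAt (f := F) (f' := F')
    (by rw [huIcc]; exact hF) hint
  rw [← this]
  have hconst : IntervalIntegrable (fun _ : ℝ => κ) volume c d := intervalIntegrable_const
  calc κ * (d - c) = ∫ _ in c..d, κ := by
        rw [intervalIntegral.integral_const, smul_eq_mul]; ring
    _ ≤ ∫ t in c..d, F' t := intervalIntegral.integral_mono_on hcd hconst hint hκ

lemma vdc1 {φ φ' φ'' a a' : ℝ → ℝ} {c d σ Ma Va : ℝ} (hcd : c ≤ d) (hσ : 0 < σ)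
    (hMa : 0 ≤ Ma) (hVa : 0 ≤ Va)
    (hφ : ∀ t ∈ Icc c d, HasDerivAt φ (φ' t) t)
    (hφ' : ∀ t ∈ Icc c d, HasDerivAt φ' (φ'' t) t)
    (hφ'c : ContinuousOn φ' (Icc c d))
    (hφ''c : ContinuousOn φ'' (Icc c d))
    (ha : ∀ t ∈ Icc c d, HasDerivAt a (a' t) t)
    (hac : ContinuousOn a (Icc c d))
    (ha'c : ContinuousOn a' (Icc c d))
    (haM : ∀ t ∈ Icc c d, |a t| ≤ Ma) (haV : ∀ t ∈ Icc c d, |a' t| ≤ Va)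
    (hlow : ∀ t ∈ Icc c d, σ ≤ |φ' t|)
    (hsgn : (∀ t ∈ Icc c d, 0 ≤ φ'' t) ∨ (∀ t ∈ Icc c d, φ'' t ≤ 0)) :
    ‖∫ t in c..d, Complex.exp (Complex.I * (φ t : ℂ)) * (a t : ℂ)‖
      ≤ (4 * Ma + (d - c) * Va) / σ := by
  have huIcc : uIcc c d = Icc c d := uIcc_of_le hcd
  set E : ℝ → ℂ := fun t => Complex.exp (Complex.I * (φ t : ℂ)) with hE_def
  have hφne : ∀ t ∈ Icc c d, φ' t ≠ 0 := by
    intro t ht h0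
    have := hlow t ht
    rw [h0, abs_zero] at this; linarith
  have habs : ∀ t ∈ Icc c d, |φ' t|⁻¹ ≤ σ⁻¹ := by
    intro t ht
    exact inv_anti₀ hσ (hlow t ht)
  set b : ℝ → ℝ := fun t => a t * (φ' t)⁻¹ with hb_def
  set b' : ℝ → ℝ := fun t => a' t * (φ' t)⁻¹ + a t * (-φ'' t / (φ' t) ^ 2) with hb'_def
  set B : ℝ → ℂ := fun t => -Complex.I * (b t : ℂ) with hB_def
  set B' : ℝ → ℂ := fun t => -Complex.I * (b' t : ℂ) with hB'_def
  have hE : ∀ t ∈ Icc c d, HasDerivAt E (Complex.I * (φ' t : ℂ) * E t) t := by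
    intro t ht
    have h1 : HasDerivAt (fun s => Complex.I * (φ s : ℂ)) (Complex.I * (φ' t : ℂ)) t :=
      ((hφ t ht).ofReal_comp).const_mul Complex.I
    have := h1.cexp
    simpa [hE_def, mul_comm] using this
  have hb : ∀ t ∈ Icc c d, HasDerivAt b (b' t) t := by
    intro t ht
    exact (ha t ht).mul ((hφ' t ht).inv (hφne t ht))
  have hB : ∀ t ∈ Icc c d, HasDerivAt B (B' t) t := by
    intro t ht
    exact ((hb t ht).ofReal_comp).const_mul (-Complex.I)
  -- continuity
  have hEc : ContinuousOn E (Icc c d) := by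
    intro t ht; exact ((hE t ht).continuousAt).continuousWithinAt
  have hb'c : ContinuousOn b' (Icc c d) := by
    apply ContinuousOn.add
    · exact ha'c.mul (hφ'c.inv₀ hφne)
    · refine hac.mul (ContinuousOn.div hφ''c.neg (hφ'c.pow 2) ?_)
      intro t ht; exact pow_ne_zero 2 (hφne t ht)
  have hB'c : ContinuousOn B' (Icc c d) :=
    continuous_const.continuousOn.mul (Complex.continuous_ofReal.comp_continuousOn hb'c)
  -- IBP
  have hibp : (∫ t in c..d, B t * (Complex.I * (φ' t : ℂ) * E t))
      = B d * E d - B c * E c - ∫ t in c..d, B' t * E t := by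
    apply intervalIntegral.integral_mul_deriv_eq_deriv_mul
    · rw [huIcc]; exact hB
    · rw [huIcc]; exact hE
    · exact (hB'c.mono (by rw [huIcc])).intervalIntegrable
    · refine (ContinuousOn.mul ?_ ?_).intervalIntegrable <;> rw [huIcc]
      · exact continuous_const.continuousOn.mul
          (Complex.continuous_ofReal.comp_continuousOn hφ'c)
      · exact hEc
  have hcongr : (∫ t in c..d, E t * (a t : ℂ))
      = ∫ t in c..d, B t * (Complex.I * (φ' t : ℂ) * E t) := by
    apply intervalIntegral.integral_congr
    intro t ht
    rw [huIcc] at ht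
    have hne : (φ' t : ℂ) ≠ 0 := by exact_mod_cast hφne t ht
    simp only [hB_def, hb_def]
    push_cast
    field_simp
    linear_combination (E t * (a t : ℂ)) * Complex.I_sq
  have hnormE : ∀ t, ‖E t‖ = 1 := fun t => norm_exp_I_mul (φ t)
  have hnormB : ∀ t ∈ Icc c d, ‖B t‖ ≤ Ma / σ := by
    intro t ht
    have : ‖B t‖ = |b t| := by
      simp [hB_def, Complex.norm_real]
    rw [this, hb_def]
    have h1 := haM t ht
    have h2 := habs t ht
    calc |a t * (φ' t)⁻¹| = |a t| * |φ' t|⁻¹ := by rw [abs_mul, abs_inv]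
      _ ≤ Ma * σ⁻¹ := mul_le_mul h1 h2 (by positivity) hMa
      _ = Ma / σ := by ring
  -- bound on ∫ |φ''|/φ'^2
  have hintvar : (∫ t in c..d, |φ'' t| / (φ' t) ^ 2) ≤ 2 / σ := by
    have hFder : ∀ t ∈ Icc c d, HasDerivAt (fun s => -(φ' s)⁻¹) (φ'' t / (φ' t) ^ 2) t := by
      intro t ht
      have := ((hφ' t ht).inv (hφne t ht)).neg
      refine this.congr_deriv ?_; ring
    have hFint : IntervalIntegrable (fun t => φ'' t / (φ' t) ^ 2) volume c d := by
      refine ((ContinuousOn.div hφ''c (hφ'c.pow 2) ?_).mono (by rw [huIcc])).intervalIntegrable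
      intro t ht; exact pow_ne_zero 2 (hφne t ht)
    have h1 := habs c ⟨le_refl c, hcd⟩
    have h2 := habs d ⟨hcd, le_refl d⟩
    have h2σ : 2 / σ = σ⁻¹ + σ⁻¹ := by field_simp; ring
    rcases hsgn with hp | hn
    · have heq : EqOn (fun t => |φ'' t| / (φ' t) ^ 2) (fun t => φ'' t / (φ' t) ^ 2)
          (uIcc c d) := by
        intro t ht; rw [huIcc] at ht; simp [abs_of_nonneg (hp t ht)]
      rw [intervalIntegral.integral_congr heq]
      rw [intervalIntegral.integral_eq_sub_of_hasDerivAt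
        (f := fun s => -(φ' s)⁻¹) (by rw [huIcc]; exact hFder) hFint]
      rw [h2σ]
      have e1 : -(φ' d)⁻¹ ≤ |φ' d|⁻¹ := by rw [← abs_inv]; exact neg_le_abs _
      have e2 : (φ' c)⁻¹ ≤ |φ' c|⁻¹ := by rw [← abs_inv]; exact le_abs_self _
      linarith
    · have heq : EqOn (fun t => |φ'' t| / (φ' t) ^ 2) (fun t => -(φ'' t / (φ' t) ^ 2))
          (uIcc c d) := by
        intro t ht; rw [huIcc] at ht; simp [abs_of_nonpos (hn t ht), neg_div]
      rw [intervalIntegral.integral_congr heq, intervalIntegral.integral_neg]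
      rw [intervalIntegral.integral_eq_sub_of_hasDerivAt
        (f := fun s => -(φ' s)⁻¹) (by rw [huIcc]; exact hFder) hFint]
      rw [h2σ]
      have e1 : (φ' d)⁻¹ ≤ |φ' d|⁻¹ := by rw [← abs_inv]; exact le_abs_self _
      have e2 : -(φ' c)⁻¹ ≤ |φ' c|⁻¹ := by rw [← abs_inv]; exact neg_le_abs _
      linarith
  have hB'bound : ∀ t ∈ Icc c d, ‖B' t‖ ≤ Va / σ + Ma * (|φ'' t| / (φ' t) ^ 2) := by
    intro t ht
    have : ‖B' t‖ = |b' t| := by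
      simp [hB'_def, Complex.norm_real]
    rw [this, hb'_def]
    simp only
    refine (abs_add_le _ _).trans ?_
    have e1 : |a' t * (φ' t)⁻¹| ≤ Va / σ := by
      rw [abs_mul, abs_inv]
      calc |a' t| * |φ' t|⁻¹ ≤ Va * σ⁻¹ :=
            mul_le_mul (haV t ht) (habs t ht) (by positivity) hVa
        _ = Va / σ := by ring
    have e2 : |a t * (-φ'' t / (φ' t) ^ 2)| ≤ Ma * (|φ'' t| / (φ' t) ^ 2) := by
      rw [abs_mul, abs_div, abs_neg]
      have : |(φ' t) ^ 2| = (φ' t) ^ 2 := abs_of_nonneg (by positivity)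
      rw [this]
      exact mul_le_mul (haM t ht) (le_refl _) (by positivity) hMa
    linarith
  -- put it together
  rw [show (∫ t in c..d, Complex.exp (Complex.I * (φ t : ℂ)) * (a t : ℂ))
      = ∫ t in c..d, E t * (a t : ℂ) from rfl, hcongr, hibp]
  have hvarint : IntervalIntegrable (fun t => |φ'' t| / (φ' t) ^ 2) volume c d := by
    refine ((hφ''c.abs.div (hφ'c.pow 2) ?_).mono (by rw [huIcc])).intervalIntegrable
    intro t ht; exact pow_ne_zero 2 (hφne t ht)
  have hI3 : ‖∫ t in c..d, B' t * E t‖ ≤ (d - c) * Va / σ + 2 * Ma / σ := by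
    have h1 : ‖∫ t in c..d, B' t * E t‖ ≤ ∫ t in c..d, ‖B' t * E t‖ :=
      intervalIntegral.norm_integral_le_integral_norm hcd
    have h2 : (∫ t in c..d, ‖B' t * E t‖)
        ≤ ∫ t in c..d, (Va / σ + Ma * (|φ'' t| / (φ' t) ^ 2)) := by
      apply intervalIntegral.integral_mono_on hcd
      · refine ((hB'c.mul hEc).norm.mono (by rw [huIcc])).intervalIntegrable
      · exact IntervalIntegrable.add intervalIntegrable_const (hvarint.const_mul Ma)
      · intro t ht
        rw [norm_mul, hnormE t, mul_one]
        exact hB'bound t ht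
    have h3 : (∫ t in c..d, (Va / σ + Ma * (|φ'' t| / (φ' t) ^ 2)))
        = (d - c) * (Va / σ) + Ma * ∫ t in c..d, |φ'' t| / (φ' t) ^ 2 := by
      rw [intervalIntegral.integral_add intervalIntegrable_const (hvarint.const_mul Ma),
        intervalIntegral.integral_const, intervalIntegral.integral_const_mul, smul_eq_mul]
    have h4 : Ma * (∫ t in c..d, |φ'' t| / (φ' t) ^ 2) ≤ Ma * (2 / σ) :=
      mul_le_mul_of_nonneg_left hintvar hMa
    calc ‖∫ t in c..d, B' t * E t‖ ≤ _ := h1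
      _ ≤ _ := h2
      _ = _ := h3
      _ ≤ (d - c) * (Va / σ) + Ma * (2 / σ) := by linarith
      _ = (d - c) * Va / σ + 2 * Ma / σ := by ring
  have hbd : ‖B d * E d‖ ≤ Ma / σ := by
    rw [norm_mul, hnormE d, mul_one]; exact hnormB d ⟨hcd, le_refl d⟩
  have hbc : ‖B c * E c‖ ≤ Ma / σ := by
    rw [norm_mul, hnormE c, mul_one]; exact hnormB c ⟨le_refl c, hcd⟩
  calc ‖B d * E d - B c * E c - ∫ t in c..d, B' t * E t‖
      ≤ ‖B d * E d - B c * E c‖ + ‖∫ t in c..d, B' t * E t‖ := norm_sub_le _ _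
    _ ≤ (‖B d * E d‖ + ‖B c * E c‖) + ‖∫ t in c..d, B' t * E t‖ := by
        linarith [norm_sub_le (B d * E d) (B c * E c)]
    _ ≤ (Ma / σ + Ma / σ) + ((d - c) * Va / σ + 2 * Ma / σ) := by linarith
    _ = (4 * Ma + (d - c) * Va) / σ := by field_simp; ring
lemma intervalIntegral_conj {f : ℝ → ℂ} {c d : ℝ} :
    (∫ t in c..d, (starRingEnd ℂ) (f t)) = (starRingEnd ℂ) (∫ t in c..d, f t) := by
  simp only [intervalIntegral]
  rw [integral_conj, integral_conj, ← map_sub]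

lemma norm_intervalIntegral_neg_phase {φ a : ℝ → ℝ} {c d : ℝ} :
    ‖∫ t in c..d, Complex.exp (Complex.I * ((-φ t : ℝ) : ℂ)) * ((a t : ℝ) : ℂ)‖
      = ‖∫ t in c..d, Complex.exp (Complex.I * (φ t : ℂ)) * ((a t : ℝ) : ℂ)‖ := by
  have heq : ∀ t : ℝ, Complex.exp (Complex.I * ((-φ t : ℝ) : ℂ)) * ((a t : ℝ) : ℂ)
      = (starRingEnd ℂ) (Complex.exp (Complex.I * (φ t : ℂ)) * ((a t : ℝ) : ℂ)) := by
    intro t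
    rw [map_mul, ← Complex.exp_conj]
    push_cast
    simp [map_mul, Complex.conj_I]
    try ring_nf
  simp_rw [heq]
  rw [intervalIntegral_conj]
  exact RCLike.norm_conj _

lemma vdc2pos {φ φ' φ'' a a' : ℝ → ℝ} {c d σ T2 Ma Va : ℝ} (hcd : c ≤ d) (hσ : 0 < σ)
    (hT2 : 0 < T2) (hMa : 0 ≤ Ma) (hVa : 0 ≤ Va)
    (hφ : ∀ t ∈ Icc c d, HasDerivAt φ (φ' t) t)
    (hφ' : ∀ t ∈ Icc c d, HasDerivAt φ' (φ'' t) t)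
    (hφ'c : ContinuousOn φ' (Icc c d))
    (hφ''c : ContinuousOn φ'' (Icc c d))
    (ha : ∀ t ∈ Icc c d, HasDerivAt a (a' t) t)
    (hac : ContinuousOn a (Icc c d))
    (ha'c : ContinuousOn a' (Icc c d))
    (haM : ∀ t ∈ Icc c d, |a t| ≤ Ma) (haV : ∀ t ∈ Icc c d, |a' t| ≤ Va)
    (hlow2 : ∀ t ∈ Icc c d, T2 ≤ φ'' t) :
    ‖∫ t in c..d, Complex.exp (Complex.I * (φ t : ℂ)) * (a t : ℂ)‖
      ≤ 2 * ((4 * Ma + (d - c) * Va) / σ) + 2 * Ma * σ / T2 := by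
  have hrhs1 : (0:ℝ) ≤ (4 * Ma + (d - c) * Va) / σ := by
    have : (0:ℝ) ≤ d - c := by linarith
    positivity
  have hrhs2 : (0:ℝ) ≤ 2 * Ma * σ / T2 := by positivity
  -- subinterval restriction helper
  have hsub : ∀ {s t : ℝ}, s ∈ Icc c d → t ∈ Icc c d → Icc s t ⊆ Icc c d := by
    intro s t hs ht x hx
    exact ⟨le_trans hs.1 hx.1, le_trans hx.2 ht.2⟩
  -- monotonicity of φ'
  have hmono : ∀ s ∈ Icc c d, ∀ t ∈ Icc c d, s ≤ t → φ' s + T2 * (t - s) ≤ φ' t := by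
    intro s hs t ht hst
    have := ftc_lb (F := φ') (F' := φ'') hst
      (fun x hx => hφ' x (hsub hs ht hx)) (hφ''c.mono (hsub hs ht))
      (fun x hx => hlow2 x (hsub hs ht hx))
    linarith
  set F : ℝ → ℂ := fun t => Complex.exp (Complex.I * (φ t : ℂ)) * (a t : ℂ) with hF_def
  have hFc : ContinuousOn F (Icc c d) := by
    apply ContinuousOn.mul
    · apply Complex.continuous_exp.comp_continuousOn
      apply ContinuousOn.mul continuous_const.continuousOn
      apply Complex.continuous_ofReal.comp_continuousOn
      intro t ht; exact (hφ t ht).continuousAt.continuousWithinAt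
    · exact Complex.continuous_ofReal.comp_continuousOn hac
  have hFint : ∀ {s t : ℝ}, s ∈ Icc c d → t ∈ Icc c d → IntervalIntegrable F volume s t := by
    intro s t hs ht
    apply (hFc.mono _).intervalIntegrable
    intro x hx
    rcases le_total s t with h | h
    · rw [uIcc_of_le h] at hx; exact hsub hs ht hx
    · rw [uIcc_of_ge h] at hx; exact hsub ht hs hx
  have hFnorm : ∀ t ∈ Icc c d, ‖F t‖ ≤ Ma := by
    intro t ht
    show ‖Complex.exp (Complex.I * (φ t : ℂ)) * (a t : ℂ)‖ ≤ Ma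
    rw [norm_mul, norm_exp_I_mul, one_mul, Complex.norm_real]
    exact haM t ht
  have htriv : ∀ {s t : ℝ}, s ∈ Icc c d → t ∈ Icc c d → s ≤ t →
      ‖∫ x in s..t, F x‖ ≤ Ma * (t - s) := by
    intro s t hs ht hst
    have := intervalIntegral.norm_integral_le_of_norm_le_const (C := Ma) (a := s) (b := t)
      (f := F) (fun x hx => by
        apply hFnorm
        exact hsub hs ht (by rw [uIoc_of_le hst] at hx; exact ⟨le_of_lt hx.1, hx.2⟩))
    rwa [abs_of_nonneg (by linarith)] at this
  -- vdc1 on a subinterval with φ' ≥ σ or φ' ≤ -σ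
  have hvdc1 : ∀ {s t : ℝ}, s ∈ Icc c d → t ∈ Icc c d → s ≤ t →
      (∀ x ∈ Icc s t, σ ≤ |φ' x|) →
      ‖∫ x in s..t, F x‖ ≤ (4 * Ma + (d - c) * Va) / σ := by
    intro s t hs ht hst hlow
    have hbd := vdc1 (φ := φ) (φ' := φ') (φ'' := φ'') (a := a) (a' := a') hst hσ hMa hVa
      (fun x hx => hφ x (hsub hs ht hx)) (fun x hx => hφ' x (hsub hs ht hx))
      (hφ'c.mono (hsub hs ht)) (hφ''c.mono (hsub hs ht))
      (fun x hx => ha x (hsub hs ht hx)) (hac.mono (hsub hs ht)) (ha'c.mono (hsub hs ht))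
      (fun x hx => haM x (hsub hs ht hx)) (fun x hx => haV x (hsub hs ht hx))
      hlow (Or.inl (fun x hx => le_trans (le_of_lt hT2) (hlow2 x (hsub hs ht hx))))
    refine hbd.trans ?_
    have h1 : t - s ≤ d - c := by
      have := hs.1; have := ht.2; linarith
    have h3 : 4 * Ma + (t - s) * Va ≤ 4 * Ma + (d - c) * Va := by nlinarith
    exact (div_le_div_iff_of_pos_right hσ).mpr h3
  by_cases h1 : σ ≤ φ' c
  · have : ‖∫ t in c..d, F t‖ ≤ (4 * Ma + (d - c) * Va) / σ := by
      apply hvdc1 ⟨le_refl c, hcd⟩ ⟨hcd, le_refl d⟩ hcd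
      intro x hx
      have := hmono c ⟨le_refl c, hcd⟩ x hx hx.1
      have h2 : σ ≤ φ' x := by nlinarith [hx.1]
      rw [abs_of_nonneg (by linarith)]; exact h2
    linarith
  by_cases h2 : φ' d ≤ -σ
  · have : ‖∫ t in c..d, F t‖ ≤ (4 * Ma + (d - c) * Va) / σ := by
      apply hvdc1 ⟨le_refl c, hcd⟩ ⟨hcd, le_refl d⟩ hcd
      intro x hx
      have := hmono x hx d ⟨hcd, le_refl d⟩ hx.2
      have h3 : φ' x ≤ -σ := by nlinarith [hx.2]
      rw [abs_of_nonpos (by linarith)]; linarith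
    linarith
  push_neg at h1 h2
  -- construct t₁
  have hT1 : ∃ t₁ ∈ Icc c d, (-σ ≤ φ' t₁) ∧
      ((∀ x ∈ Icc c t₁, φ' x ≤ -σ) ∨ t₁ = c) := by
    by_cases hc1 : φ' c ≤ -σ
    · obtain ⟨t₁, ht₁mem, ht₁⟩ := intermediate_value_Icc hcd hφ'c
        (⟨hc1, le_of_lt h2⟩ : (-σ) ∈ Icc (φ' c) (φ' d))
      refine ⟨t₁, ht₁mem, le_of_eq ht₁.symm, Or.inl ?_⟩
      intro x hx
      have hxm : x ∈ Icc c d := hsub ⟨le_refl c, hcd⟩ ht₁mem hx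
      have := hmono x hxm t₁ ht₁mem hx.2
      nlinarith [hx.2]
    · exact ⟨c, ⟨le_refl c, hcd⟩, by push_neg at hc1; linarith, Or.inr rfl⟩
  have hT2' : ∃ t₂ ∈ Icc c d, (φ' t₂ ≤ σ) ∧
      ((∀ x ∈ Icc t₂ d, σ ≤ φ' x) ∨ t₂ = d) := by
    by_cases hd1 : σ ≤ φ' d
    · obtain ⟨t₂, ht₂mem, ht₂⟩ := intermediate_value_Icc hcd hφ'c
        (⟨le_of_lt h1, hd1⟩ : σ ∈ Icc (φ' c) (φ' d))
      refine ⟨t₂, ht₂mem, le_of_eq ht₂, Or.inl ?_⟩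
      intro x hx
      have hxm : x ∈ Icc c d := hsub ht₂mem ⟨hcd, le_refl d⟩ hx
      have := hmono t₂ ht₂mem x hxm hx.1
      nlinarith [hx.1]
    · exact ⟨d, ⟨hcd, le_refl d⟩, by push_neg at hd1; linarith, Or.inr rfl⟩
  obtain ⟨t₁, ht₁mem, ht₁ge, ht₁alt⟩ := hT1
  obtain ⟨t₂, ht₂mem, ht₂le, ht₂alt⟩ := hT2'
  have ht₁₂ : t₁ ≤ t₂ := by
    by_contra hcon
    push_neg at hcon
    rcases ht₁alt with hl | he
    · have hphit2 : φ' t₂ ≤ -σ := hl t₂ ⟨ht₂mem.1, le_of_lt hcon⟩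
      rcases ht₂alt with hl2 | he2
      · have := hl2 t₂ ⟨le_refl t₂, ht₂mem.2⟩; linarith
      · rw [he2] at hphit2; linarith
    · rw [he] at hcon; exact absurd ht₂mem.1 (not_le.mpr hcon)
  -- split
  have hsplit : (∫ t in c..d, F t) =
      (∫ t in c..t₁, F t) + (∫ t in t₁..t₂, F t) + (∫ t in t₂..d, F t) := by
    rw [intervalIntegral.integral_add_adjacent_intervals
        (hFint ⟨le_refl c, hcd⟩ ht₁mem) (hFint ht₁mem ht₂mem),
      intervalIntegral.integral_add_adjacent_intervals
        (hFint ⟨le_refl c, hcd⟩ ht₂mem) (hFint ht₂mem ⟨hcd, le_refl d⟩)]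
  have hleft : ‖∫ t in c..t₁, F t‖ ≤ (4 * Ma + (d - c) * Va) / σ := by
    rcases ht₁alt with hl | he
    · apply hvdc1 ⟨le_refl c, hcd⟩ ht₁mem ht₁mem.1
      intro x hx
      have := hl x hx
      rw [abs_of_nonpos (by linarith)]; linarith
    · rw [he, intervalIntegral.integral_same, norm_zero]; exact hrhs1
  have hright : ‖∫ t in t₂..d, F t‖ ≤ (4 * Ma + (d - c) * Va) / σ := by
    rcases ht₂alt with hl | he
    · apply hvdc1 ht₂mem ⟨hcd, le_refl d⟩ ht₂mem.2
      intro x hx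
      have := hl x hx
      rw [abs_of_nonneg (by linarith)]; linarith
    · rw [he, intervalIntegral.integral_same, norm_zero]; exact hrhs1
  have hmid : ‖∫ t in t₁..t₂, F t‖ ≤ 2 * Ma * σ / T2 := by
    have hlen : t₂ - t₁ ≤ 2 * σ / T2 := by
      have := hmono t₁ ht₁mem t₂ ht₂mem ht₁₂
      rw [le_div_iff₀ hT2]
      nlinarith
    have := htriv ht₁mem ht₂mem ht₁₂
    calc ‖∫ t in t₁..t₂, F t‖ ≤ Ma * (t₂ - t₁) := this
      _ ≤ Ma * (2 * σ / T2) := mul_le_mul_of_nonneg_left hlen hMa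
      _ = 2 * Ma * σ / T2 := by ring
  rw [hsplit]
  calc ‖(∫ t in c..t₁, F t) + (∫ t in t₁..t₂, F t) + ∫ t in t₂..d, F t‖
      ≤ ‖(∫ t in c..t₁, F t) + (∫ t in t₁..t₂, F t)‖ + ‖∫ t in t₂..d, F t‖ := norm_add_le _ _
    _ ≤ (‖∫ t in c..t₁, F t‖ + ‖∫ t in t₁..t₂, F t‖) + ‖∫ t in t₂..d, F t‖ := by
        linarith [norm_add_le (∫ t in c..t₁, F t) (∫ t in t₁..t₂, F t)]
    _ ≤ 2 * ((4 * Ma + (d - c) * Va) / σ) + 2 * Ma * σ / T2 := by linarith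

lemma vdc2 {φ φ' φ'' a a' : ℝ → ℝ} {c d σ T2 Ma Va : ℝ} (hcd : c ≤ d) (hσ : 0 < σ)
    (hT2 : 0 < T2) (hMa : 0 ≤ Ma) (hVa : 0 ≤ Va)
    (hφ : ∀ t ∈ Icc c d, HasDerivAt φ (φ' t) t)
    (hφ' : ∀ t ∈ Icc c d, HasDerivAt φ' (φ'' t) t)
    (hφ'c : ContinuousOn φ' (Icc c d))
    (hφ''c : ContinuousOn φ'' (Icc c d))
    (ha : ∀ t ∈ Icc c d, HasDerivAt a (a' t) t)
    (hac : ContinuousOn a (Icc c d))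
    (ha'c : ContinuousOn a' (Icc c d))
    (haM : ∀ t ∈ Icc c d, |a t| ≤ Ma) (haV : ∀ t ∈ Icc c d, |a' t| ≤ Va)
    (hlow2 : (∀ t ∈ Icc c d, T2 ≤ φ'' t) ∨ (∀ t ∈ Icc c d, φ'' t ≤ -T2)) :
    ‖∫ t in c..d, Complex.exp (Complex.I * (φ t : ℂ)) * (a t : ℂ)‖
      ≤ 2 * ((4 * Ma + (d - c) * Va) / σ) + 2 * Ma * σ / T2 := by
  rcases hlow2 with hp | hn
  · exact vdc2pos hcd hσ hT2 hMa hVa hφ hφ' hφ'c hφ''c ha hac ha'c haM haV hp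
  · have key := vdc2pos (φ := fun t => -φ t) (φ' := fun t => -φ' t) (φ'' := fun t => -φ'' t)
      (a := a) (a' := a') hcd hσ hT2 hMa hVa
      (fun t ht => (hφ t ht).neg) (fun t ht => (hφ' t ht).neg)
      hφ'c.neg hφ''c.neg ha hac ha'c haM haV
      (fun t ht => by have := hn t ht; linarith)
    rwa [norm_intervalIntegral_neg_phase (φ := φ) (a := a)] at key
lemma vdc3pos {φ φ' φ'' φ''' a a' : ℝ → ℝ} {c d σ T2 T3 Ma Va : ℝ} (hcd : c ≤ d)
    (hσ : 0 < σ) (hT2 : 0 < T2) (hT3 : 0 < T3) (hMa : 0 ≤ Ma) (hVa : 0 ≤ Va)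
    (hφ : ∀ t ∈ Icc c d, HasDerivAt φ (φ' t) t)
    (hφ' : ∀ t ∈ Icc c d, HasDerivAt φ' (φ'' t) t)
    (hφ'' : ∀ t ∈ Icc c d, HasDerivAt φ'' (φ''' t) t)
    (hφ'c : ContinuousOn φ' (Icc c d))
    (hφ''c : ContinuousOn φ'' (Icc c d))
    (hφ'''c : ContinuousOn φ''' (Icc c d))
    (ha : ∀ t ∈ Icc c d, HasDerivAt a (a' t) t)
    (hac : ContinuousOn a (Icc c d))
    (ha'c : ContinuousOn a' (Icc c d))
    (haM : ∀ t ∈ Icc c d, |a t| ≤ Ma) (haV : ∀ t ∈ Icc c d, |a' t| ≤ Va)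
    (hsgn3 : ∀ t ∈ Icc c d, 0 ≤ φ''' t)
    (hdich : ∀ t ∈ Icc c d, |φ'' t| ≤ T2 → T3 ≤ |φ''' t|) :
    ‖∫ t in c..d, Complex.exp (Complex.I * (φ t : ℂ)) * (a t : ℂ)‖
      ≤ 2 * (2 * ((4 * Ma + (d - c) * Va) / σ) + 2 * Ma * σ / T2) + 2 * Ma * T2 / T3 := by
  have hrhs1 : (0:ℝ) ≤ 2 * ((4 * Ma + (d - c) * Va) / σ) + 2 * Ma * σ / T2 := by
    have : (0:ℝ) ≤ d - c := by linarith
    positivity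
  have hsub : ∀ {s t : ℝ}, s ∈ Icc c d → t ∈ Icc c d → Icc s t ⊆ Icc c d := by
    intro s t hs ht x hx
    exact ⟨le_trans hs.1 hx.1, le_trans hx.2 ht.2⟩
  have hmono : ∀ s ∈ Icc c d, ∀ t ∈ Icc c d, s ≤ t → φ'' s ≤ φ'' t := by
    intro s hs t ht hst
    have := ftc_lb (F := φ'') (F' := φ''') (κ := 0) hst
      (fun x hx => hφ'' x (hsub hs ht hx)) (hφ'''c.mono (hsub hs ht))
      (fun x hx => hsgn3 x (hsub hs ht hx))
    linarith
  set F : ℝ → ℂ := fun t => Complex.exp (Complex.I * (φ t : ℂ)) * (a t : ℂ) with hF_def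
  have hFc : ContinuousOn F (Icc c d) := by
    apply ContinuousOn.mul
    · apply Complex.continuous_exp.comp_continuousOn
      apply ContinuousOn.mul continuous_const.continuousOn
      apply Complex.continuous_ofReal.comp_continuousOn
      intro t ht; exact (hφ t ht).continuousAt.continuousWithinAt
    · exact Complex.continuous_ofReal.comp_continuousOn hac
  have hFint : ∀ {s t : ℝ}, s ∈ Icc c d → t ∈ Icc c d → IntervalIntegrable F volume s t := by
    intro s t hs ht
    apply (hFc.mono _).intervalIntegrable
    intro x hx
    rcases le_total s t with h | h
    · rw [uIcc_of_le h] at hx; exact hsub hs ht hx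
    · rw [uIcc_of_ge h] at hx; exact hsub ht hs hx
  have hFnorm : ∀ t ∈ Icc c d, ‖F t‖ ≤ Ma := by
    intro t ht
    show ‖Complex.exp (Complex.I * (φ t : ℂ)) * (a t : ℂ)‖ ≤ Ma
    rw [norm_mul, norm_exp_I_mul, one_mul, Complex.norm_real]
    exact haM t ht
  have htriv : ∀ {s t : ℝ}, s ∈ Icc c d → t ∈ Icc c d → s ≤ t →
      ‖∫ x in s..t, F x‖ ≤ Ma * (t - s) := by
    intro s t hs ht hst
    have := intervalIntegral.norm_integral_le_of_norm_le_const (C := Ma) (a := s) (b := t)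
      (f := F) (fun x hx => by
        apply hFnorm
        exact hsub hs ht (by rw [uIoc_of_le hst] at hx; exact ⟨le_of_lt hx.1, hx.2⟩))
    rwa [abs_of_nonneg (by linarith)] at this
  -- vdc2 on a subinterval with |φ''| ≥ T2 of constant sign
  have hvdc2' : ∀ {s t : ℝ}, s ∈ Icc c d → t ∈ Icc c d → s ≤ t →
      ((∀ x ∈ Icc s t, T2 ≤ φ'' x) ∨ (∀ x ∈ Icc s t, φ'' x ≤ -T2)) →
      ‖∫ x in s..t, F x‖ ≤ 2 * ((4 * Ma + (d - c) * Va) / σ) + 2 * Ma * σ / T2 := by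
    intro s t hs ht hst hlow
    have hbd := vdc2 (φ := φ) (φ' := φ') (φ'' := φ'') (a := a) (a' := a') hst hσ hT2 hMa hVa
      (fun x hx => hφ x (hsub hs ht hx)) (fun x hx => hφ' x (hsub hs ht hx))
      (hφ'c.mono (hsub hs ht)) (hφ''c.mono (hsub hs ht))
      (fun x hx => ha x (hsub hs ht hx)) (hac.mono (hsub hs ht)) (ha'c.mono (hsub hs ht))
      (fun x hx => haM x (hsub hs ht hx)) (fun x hx => haV x (hsub hs ht hx))
      hlow
    refine hbd.trans ?_
    have h1 : t - s ≤ d - c := by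
      have := hs.1; have := ht.2; linarith
    have h3 : 4 * Ma + (t - s) * Va ≤ 4 * Ma + (d - c) * Va := by nlinarith
    have := (div_le_div_iff_of_pos_right hσ).mpr h3
    linarith
  by_cases h1 : T2 ≤ φ'' c
  · have : ‖∫ t in c..d, F t‖ ≤ 2 * ((4 * Ma + (d - c) * Va) / σ) + 2 * Ma * σ / T2 := by
      apply hvdc2' ⟨le_refl c, hcd⟩ ⟨hcd, le_refl d⟩ hcd
      exact Or.inl (fun x hx => le_trans h1 (hmono c ⟨le_refl c, hcd⟩ x hx hx.1))
    have h4 : (0:ℝ) ≤ 2 * Ma * T2 / T3 := by positivity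
    linarith
  by_cases h2 : φ'' d ≤ -T2
  · have : ‖∫ t in c..d, F t‖ ≤ 2 * ((4 * Ma + (d - c) * Va) / σ) + 2 * Ma * σ / T2 := by
      apply hvdc2' ⟨le_refl c, hcd⟩ ⟨hcd, le_refl d⟩ hcd
      exact Or.inr (fun x hx => le_trans (hmono x hx d ⟨hcd, le_refl d⟩ hx.2) h2)
    have h4 : (0:ℝ) ≤ 2 * Ma * T2 / T3 := by positivity
    linarith
  push_neg at h1 h2
  have hU1 : ∃ u₁ ∈ Icc c d, (-T2 ≤ φ'' u₁) ∧
      ((∀ x ∈ Icc c u₁, φ'' x ≤ -T2) ∨ u₁ = c) := by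
    by_cases hc1 : φ'' c ≤ -T2
    · obtain ⟨u₁, hu₁mem, hu₁⟩ := intermediate_value_Icc hcd hφ''c
        (⟨hc1, le_of_lt h2⟩ : (-T2) ∈ Icc (φ'' c) (φ'' d))
      refine ⟨u₁, hu₁mem, le_of_eq hu₁.symm, Or.inl ?_⟩
      intro x hx
      have hxm : x ∈ Icc c d := hsub ⟨le_refl c, hcd⟩ hu₁mem hx
      have := hmono x hxm u₁ hu₁mem hx.2
      linarith
    · exact ⟨c, ⟨le_refl c, hcd⟩, by push_neg at hc1; linarith, Or.inr rfl⟩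
  have hU2 : ∃ u₂ ∈ Icc c d, (φ'' u₂ ≤ T2) ∧
      ((∀ x ∈ Icc u₂ d, T2 ≤ φ'' x) ∨ u₂ = d) := by
    by_cases hd1 : T2 ≤ φ'' d
    · obtain ⟨u₂, hu₂mem, hu₂⟩ := intermediate_value_Icc hcd hφ''c
        (⟨le_of_lt h1, hd1⟩ : T2 ∈ Icc (φ'' c) (φ'' d))
      refine ⟨u₂, hu₂mem, le_of_eq hu₂, Or.inl ?_⟩
      intro x hx
      have hxm : x ∈ Icc c d := hsub hu₂mem ⟨hcd, le_refl d⟩ hx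
      have := hmono u₂ hu₂mem x hxm hx.1
      linarith
    · exact ⟨d, ⟨hcd, le_refl d⟩, by push_neg at hd1; linarith, Or.inr rfl⟩
  obtain ⟨u₁, hu₁mem, hu₁ge, hu₁alt⟩ := hU1
  obtain ⟨u₂, hu₂mem, hu₂le, hu₂alt⟩ := hU2
  have hu₁₂ : u₁ ≤ u₂ := by
    by_contra hcon
    push_neg at hcon
    rcases hu₁alt with hl | he
    · have hphiu2 : φ'' u₂ ≤ -T2 := hl u₂ ⟨hu₂mem.1, le_of_lt hcon⟩
      rcases hu₂alt with hl2 | he2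
      · have := hl2 u₂ ⟨le_refl u₂, hu₂mem.2⟩; linarith
      · rw [he2] at hphiu2; linarith
    · rw [he] at hcon; exact absurd hu₂mem.1 (not_le.mpr hcon)
  have hsplit : (∫ t in c..d, F t) =
      (∫ t in c..u₁, F t) + (∫ t in u₁..u₂, F t) + (∫ t in u₂..d, F t) := by
    rw [intervalIntegral.integral_add_adjacent_intervals
        (hFint ⟨le_refl c, hcd⟩ hu₁mem) (hFint hu₁mem hu₂mem),
      intervalIntegral.integral_add_adjacent_intervals
        (hFint ⟨le_refl c, hcd⟩ hu₂mem) (hFint hu₂mem ⟨hcd, le_refl d⟩)]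
  have hleft : ‖∫ t in c..u₁, F t‖ ≤ 2 * ((4 * Ma + (d - c) * Va) / σ) + 2 * Ma * σ / T2 := by
    rcases hu₁alt with hl | he
    · exact hvdc2' ⟨le_refl c, hcd⟩ hu₁mem hu₁mem.1 (Or.inr hl)
    · rw [he, intervalIntegral.integral_same, norm_zero]; exact hrhs1
  have hright : ‖∫ t in u₂..d, F t‖ ≤ 2 * ((4 * Ma + (d - c) * Va) / σ) + 2 * Ma * σ / T2 := by
    rcases hu₂alt with hl | he
    · exact hvdc2' hu₂mem ⟨hcd, le_refl d⟩ hu₂mem.2 (Or.inl hl)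
    · rw [he, intervalIntegral.integral_same, norm_zero]; exact hrhs1
  have hmid : ‖∫ t in u₁..u₂, F t‖ ≤ 2 * Ma * T2 / T3 := by
    have hbig : ∀ x ∈ Icc u₁ u₂, T3 ≤ φ''' x := by
      intro x hx
      have hxm : x ∈ Icc c d := hsub hu₁mem hu₂mem hx
      have hb1 : φ'' x ≤ T2 := le_trans (hmono x hxm u₂ hu₂mem hx.2) hu₂le
      have hb2 : -T2 ≤ φ'' x := le_trans hu₁ge (hmono u₁ hu₁mem x hxm hx.1)
      have := hdich x hxm (abs_le.mpr ⟨hb2, hb1⟩)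
      rwa [abs_of_nonneg (hsgn3 x hxm)] at this
    have hlen : u₂ - u₁ ≤ 2 * T2 / T3 := by
      have := ftc_lb (F := φ'') (F' := φ''') (κ := T3) hu₁₂
        (fun x hx => hφ'' x (hsub hu₁mem hu₂mem hx)) (hφ'''c.mono (hsub hu₁mem hu₂mem))
        hbig
      rw [le_div_iff₀ hT3]
      nlinarith
    calc ‖∫ t in u₁..u₂, F t‖ ≤ Ma * (u₂ - u₁) := htriv hu₁mem hu₂mem hu₁₂
      _ ≤ Ma * (2 * T2 / T3) := mul_le_mul_of_nonneg_left hlen hMa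
      _ = 2 * Ma * T2 / T3 := by ring
  rw [hsplit]
  calc ‖(∫ t in c..u₁, F t) + (∫ t in u₁..u₂, F t) + ∫ t in u₂..d, F t‖
      ≤ ‖(∫ t in c..u₁, F t) + (∫ t in u₁..u₂, F t)‖ + ‖∫ t in u₂..d, F t‖ := norm_add_le _ _
    _ ≤ (‖∫ t in c..u₁, F t‖ + ‖∫ t in u₁..u₂, F t‖) + ‖∫ t in u₂..d, F t‖ := by
        linarith [norm_add_le (∫ t in c..u₁, F t) (∫ t in u₁..u₂, F t)]
    _ ≤ 2 * (2 * ((4 * Ma + (d - c) * Va) / σ) + 2 * Ma * σ / T2) + 2 * Ma * T2 / T3 := by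
        linarith

lemma vdc3 {φ φ' φ'' φ''' a a' : ℝ → ℝ} {c d σ T2 T3 Ma Va : ℝ} (hcd : c ≤ d)
    (hσ : 0 < σ) (hT2 : 0 < T2) (hT3 : 0 < T3) (hMa : 0 ≤ Ma) (hVa : 0 ≤ Va)
    (hφ : ∀ t ∈ Icc c d, HasDerivAt φ (φ' t) t)
    (hφ' : ∀ t ∈ Icc c d, HasDerivAt φ' (φ'' t) t)
    (hφ'' : ∀ t ∈ Icc c d, HasDerivAt φ'' (φ''' t) t)
    (hφ'c : ContinuousOn φ' (Icc c d))
    (hφ''c : ContinuousOn φ'' (Icc c d))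
    (hφ'''c : ContinuousOn φ''' (Icc c d))
    (ha : ∀ t ∈ Icc c d, HasDerivAt a (a' t) t)
    (hac : ContinuousOn a (Icc c d))
    (ha'c : ContinuousOn a' (Icc c d))
    (haM : ∀ t ∈ Icc c d, |a t| ≤ Ma) (haV : ∀ t ∈ Icc c d, |a' t| ≤ Va)
    (hsgn3 : (∀ t ∈ Icc c d, 0 ≤ φ''' t) ∨ (∀ t ∈ Icc c d, φ''' t ≤ 0))
    (hdich : ∀ t ∈ Icc c d, |φ'' t| ≤ T2 → T3 ≤ |φ''' t|) :
    ‖∫ t in c..d, Complex.exp (Complex.I * (φ t : ℂ)) * (a t : ℂ)‖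
      ≤ 2 * (2 * ((4 * Ma + (d - c) * Va) / σ) + 2 * Ma * σ / T2) + 2 * Ma * T2 / T3 := by
  rcases hsgn3 with hp | hn
  · exact vdc3pos hcd hσ hT2 hT3 hMa hVa hφ hφ' hφ'' hφ'c hφ''c hφ'''c ha hac ha'c haM haV
      hp hdich
  · have key := vdc3pos (φ := fun t => -φ t) (φ' := fun t => -φ' t) (φ'' := fun t => -φ'' t)
      (φ''' := fun t => -φ''' t) (a := a) (a' := a') hcd hσ hT2 hT3 hMa hVa
      (fun t ht => (hφ t ht).neg) (fun t ht => (hφ' t ht).neg) (fun t ht => (hφ'' t ht).neg)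
      hφ'c.neg hφ''c.neg hφ'''c.neg ha hac ha'c haM haV
      (fun t ht => by have := hn t ht; linarith)
      (fun t ht hle => by
        simp only [abs_neg] at *
        exact hdich t ht hle)
    rwa [norm_intervalIntegral_neg_phase (φ := φ) (a := a)] at key
lemma vdc4 {φ φ' φ'' φ''' a a' : ℝ → ℝ} {c d σ T2 T3 Ma Va : ℝ} (hcd : c ≤ d)
    (hσ : 0 < σ) (hT2 : 0 < T2) (hT3 : 0 < T3) (hMa : 0 ≤ Ma) (hVa : 0 ≤ Va)
    (hφ : ∀ t ∈ Icc c d, HasDerivAt φ (φ' t) t)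
    (hφ' : ∀ t ∈ Icc c d, HasDerivAt φ' (φ'' t) t)
    (hφ'' : ∀ t ∈ Icc c d, HasDerivAt φ'' (φ''' t) t)
    (hφ'c : ContinuousOn φ' (Icc c d))
    (hφ''c : ContinuousOn φ'' (Icc c d))
    (hφ'''c : ContinuousOn φ''' (Icc c d))
    (ha : ∀ t ∈ Icc c d, HasDerivAt a (a' t) t)
    (hac : ContinuousOn a (Icc c d))
    (ha'c : ContinuousOn a' (Icc c d))
    (haM : ∀ t ∈ Icc c d, |a t| ≤ Ma) (haV : ∀ t ∈ Icc c d, |a' t| ≤ Va)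
    (hm : ∃ m : ℝ, ((∀ t ∈ Icc c d, t ≤ m → 0 ≤ φ''' t) ∧ (∀ t ∈ Icc c d, m ≤ t → φ''' t ≤ 0))
        ∨ ((∀ t ∈ Icc c d, t ≤ m → φ''' t ≤ 0) ∧ (∀ t ∈ Icc c d, m ≤ t → 0 ≤ φ''' t)))
    (hdich : ∀ t ∈ Icc c d, |φ'' t| ≤ T2 → T3 ≤ |φ''' t|) :
    ‖∫ t in c..d, Complex.exp (Complex.I * (φ t : ℂ)) * (a t : ℂ)‖
      ≤ 2 * (2 * (2 * ((4 * Ma + (d - c) * Va) / σ) + 2 * Ma * σ / T2) + 2 * Ma * T2 / T3) := by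
  have hdc : (0:ℝ) ≤ d - c := by linarith
  have hinner : (0:ℝ) ≤ 2 * (2 * ((4 * Ma + (d - c) * Va) / σ) + 2 * Ma * σ / T2)
      + 2 * Ma * T2 / T3 := by positivity
  have hsub : ∀ {s t : ℝ}, s ∈ Icc c d → t ∈ Icc c d → Icc s t ⊆ Icc c d := by
    intro s t hs ht x hx
    exact ⟨le_trans hs.1 hx.1, le_trans hx.2 ht.2⟩
  have hvdc3' : ∀ {s t : ℝ}, s ∈ Icc c d → t ∈ Icc c d → s ≤ t →
      ((∀ x ∈ Icc s t, 0 ≤ φ''' x) ∨ (∀ x ∈ Icc s t, φ''' x ≤ 0)) →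
      ‖∫ x in s..t, Complex.exp (Complex.I * (φ x : ℂ)) * (a x : ℂ)‖
        ≤ 2 * (2 * ((4 * Ma + (d - c) * Va) / σ) + 2 * Ma * σ / T2) + 2 * Ma * T2 / T3 := by
    intro s t hs ht hst hsgn
    have hbd := vdc3 (φ := φ) (φ' := φ') (φ'' := φ'') (φ''' := φ''') (a := a) (a' := a')
      hst hσ hT2 hT3 hMa hVa
      (fun x hx => hφ x (hsub hs ht hx)) (fun x hx => hφ' x (hsub hs ht hx))
      (fun x hx => hφ'' x (hsub hs ht hx))
      (hφ'c.mono (hsub hs ht)) (hφ''c.mono (hsub hs ht)) (hφ'''c.mono (hsub hs ht))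
      (fun x hx => ha x (hsub hs ht hx)) (hac.mono (hsub hs ht)) (ha'c.mono (hsub hs ht))
      (fun x hx => haM x (hsub hs ht hx)) (fun x hx => haV x (hsub hs ht hx))
      hsgn (fun x hx => hdich x (hsub hs ht hx))
    refine hbd.trans ?_
    have h1 : t - s ≤ d - c := by
      have := hs.1; have := ht.2; linarith
    have h3 : 4 * Ma + (t - s) * Va ≤ 4 * Ma + (d - c) * Va := by nlinarith
    have h4 := (div_le_div_iff_of_pos_right hσ).mpr h3
    linarith
  set F : ℝ → ℂ := fun t => Complex.exp (Complex.I * (φ t : ℂ)) * (a t : ℂ) with hF_def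
  have hFc : ContinuousOn F (Icc c d) := by
    apply ContinuousOn.mul
    · apply Complex.continuous_exp.comp_continuousOn
      apply ContinuousOn.mul continuous_const.continuousOn
      apply Complex.continuous_ofReal.comp_continuousOn
      intro t ht; exact (hφ t ht).continuousAt.continuousWithinAt
    · exact Complex.continuous_ofReal.comp_continuousOn hac
  have hFint : ∀ {s t : ℝ}, s ∈ Icc c d → t ∈ Icc c d → IntervalIntegrable F volume s t := by
    intro s t hs ht
    apply (hFc.mono _).intervalIntegrable
    intro x hx
    rcases le_total s t with h | h
    · rw [uIcc_of_le h] at hx; exact hsub hs ht hx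
    · rw [uIcc_of_ge h] at hx; exact hsub ht hs hx
  obtain ⟨m, hm⟩ := hm
  by_cases hm1 : m < c
  · have hall : ∀ x ∈ Icc c d, m ≤ x := fun x hx => le_trans (le_of_lt hm1) hx.1
    have : ‖∫ x in c..d, F x‖
        ≤ 2 * (2 * ((4 * Ma + (d - c) * Va) / σ) + 2 * Ma * σ / T2) + 2 * Ma * T2 / T3 := by
      apply hvdc3' ⟨le_refl c, hcd⟩ ⟨hcd, le_refl d⟩ hcd
      rcases hm with ⟨_, h2⟩ | ⟨_, h2⟩
      · exact Or.inr (fun x hx => h2 x hx (hall x hx))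
      · exact Or.inl (fun x hx => h2 x hx (hall x hx))
    linarith
  by_cases hm2 : d < m
  · have hall : ∀ x ∈ Icc c d, x ≤ m := fun x hx => le_trans hx.2 (le_of_lt hm2)
    have : ‖∫ x in c..d, F x‖
        ≤ 2 * (2 * ((4 * Ma + (d - c) * Va) / σ) + 2 * Ma * σ / T2) + 2 * Ma * T2 / T3 := by
      apply hvdc3' ⟨le_refl c, hcd⟩ ⟨hcd, le_refl d⟩ hcd
      rcases hm with ⟨h1, _⟩ | ⟨h1, _⟩
      · exact Or.inl (fun x hx => h1 x hx (hall x hx))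
      · exact Or.inr (fun x hx => h1 x hx (hall x hx))
    linarith
  push_neg at hm1 hm2
  have hmmem : m ∈ Icc c d := ⟨hm1, hm2⟩
  have hsplit : (∫ t in c..d, F t) = (∫ t in c..m, F t) + (∫ t in m..d, F t) := by
    rw [intervalIntegral.integral_add_adjacent_intervals
      (hFint ⟨le_refl c, hcd⟩ hmmem) (hFint hmmem ⟨hcd, le_refl d⟩)]
  have hL : ‖∫ t in c..m, F t‖
      ≤ 2 * (2 * ((4 * Ma + (d - c) * Va) / σ) + 2 * Ma * σ / T2) + 2 * Ma * T2 / T3 := by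
    apply hvdc3' ⟨le_refl c, hcd⟩ hmmem hm1
    rcases hm with ⟨h1, _⟩ | ⟨h1, _⟩
    · exact Or.inl (fun x hx => h1 x (hsub ⟨le_refl c, hcd⟩ hmmem hx) hx.2)
    · exact Or.inr (fun x hx => h1 x (hsub ⟨le_refl c, hcd⟩ hmmem hx) hx.2)
  have hR : ‖∫ t in m..d, F t‖
      ≤ 2 * (2 * ((4 * Ma + (d - c) * Va) / σ) + 2 * Ma * σ / T2) + 2 * Ma * T2 / T3 := by
    apply hvdc3' hmmem ⟨hcd, le_refl d⟩ hm2
    rcases hm with ⟨_, h2⟩ | ⟨_, h2⟩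
    · exact Or.inr (fun x hx => h2 x (hsub hmmem ⟨hcd, le_refl d⟩ hx) hx.1)
    · exact Or.inl (fun x hx => h2 x (hsub hmmem ⟨hcd, le_refl d⟩ hx) hx.1)
  rw [hsplit]
  calc ‖(∫ t in c..m, F t) + ∫ t in m..d, F t‖
      ≤ ‖∫ t in c..m, F t‖ + ‖∫ t in m..d, F t‖ := norm_add_le _ _
    _ ≤ _ := by linarith
lemma rpow_upper_on {t β : ℝ} (h1 : 1/2 ≤ t) (h2 : t ≤ 2) : t ^ β ≤ (2:ℝ) ^ |β| := by
  have ht0 : (0:ℝ) < t := by linarith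
  rcases le_or_gt 0 β with hβ | hβ
  · rw [abs_of_nonneg hβ]
    exact Real.rpow_le_rpow (le_of_lt ht0) h2 hβ
  · rw [abs_of_neg hβ]
    have : t ^ β ≤ ((1:ℝ)/2) ^ β := Real.rpow_le_rpow_of_nonpos (by norm_num) h1 (le_of_lt hβ)
    refine this.trans (le_of_eq ?_)
    rw [show ((1:ℝ)/2) = (2:ℝ) ^ (-1:ℝ) by rw [Real.rpow_neg_one]; norm_num,
      ← Real.rpow_mul (by norm_num : (0:ℝ) ≤ 2)]
    norm_num

lemma rpow_lower_on {t β : ℝ} (h1 : 1/2 ≤ t) (h2 : t ≤ 2) : ((2:ℝ) ^ |β|)⁻¹ ≤ t ^ β := by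
  have ht0 : (0:ℝ) < t := by linarith
  have h := rpow_upper_on (t := t) (β := -β) h1 h2
  rw [abs_neg] at h
  have ht : t ^ (-β) = (t ^ β)⁻¹ := Real.rpow_neg (le_of_lt ht0) β
  rw [ht] at h
  have htp : (0:ℝ) < t ^ β := Real.rpow_pos_of_pos ht0 β
  have h2p : (0:ℝ) < (2:ℝ) ^ |β| := Real.rpow_pos_of_pos (by norm_num) _
  exact (inv_le_comm₀ h2p htp).mpr h
lemma dich_lemma {α h ξ t : ℝ} (hh0 : 0 < h) (hh1 : h ≤ 1)
    (ht1 : 1/2 ≤ t) (ht2 : t ≤ 2) (hv1 : 1/2 ≤ h*t - ξ) (hv2 : h*t - ξ ≤ 2)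
    (hD2 : |t ^ (α-2) - h^2 * (h*t - ξ) ^ (α-2)| ≤ |ξ| / (16 * (2:ℝ) ^ |α-2|)) :
    |ξ| / (8 * (2:ℝ) ^ |α-2|) ≤ |t ^ (α-3) - h^3 * (h*t - ξ) ^ (α-3)| := by
  set P2 : ℝ := (2:ℝ) ^ |α-2| with hP2_def
  have hP2pos : 0 < P2 := Real.rpow_pos_of_pos (by norm_num) _
  have ht0 : (0:ℝ) < t := by linarith
  have hv0 : (0:ℝ) < h*t - ξ := by linarith
  set v : ℝ := h*t - ξ with hv_def
  set X : ℝ := t ^ (α-2) with hX_def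
  set Y : ℝ := v ^ (α-2) with hY_def
  have hXpos : 0 < X := Real.rpow_pos_of_pos ht0 _
  have hXlow : P2⁻¹ ≤ X := rpow_lower_on ht1 ht2
  -- identity
  have ht3 : t ^ (α-3) = X / t := by
    rw [hX_def, show α-3 = (α-2) - 1 by ring, Real.rpow_sub ht0, Real.rpow_one]
  have hv3 : v ^ (α-3) = Y / v := by
    rw [hY_def, show α-3 = (α-2) - 1 by ring, Real.rpow_sub hv0, Real.rpow_one]
  have hid : t ^ (α-3) - h^3 * v ^ (α-3)
      = -X * ξ / (t * v) + (X - h^2 * Y) * (h / v) := by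
    rw [ht3, hv3, hv_def]
    have hw : t * h - ξ ≠ 0 := by rw [mul_comm]; exact ne_of_gt hv0
    have hw' : h * t - ξ ≠ 0 := ne_of_gt hv0
    field_simp
    ring
  -- estimates
  have huv : 0 < t * v := mul_pos ht0 hv0
  have huv4 : t * v ≤ 4 := by nlinarith
  have hhv : h / v ≤ 2 := by
    rw [div_le_iff₀ hv0]; nlinarith
  have hhv0 : 0 ≤ h / v := by positivity
  have hT1 : |(-X * ξ / (t * v))| = X * |ξ| / (t * v) := by
    rw [abs_div, abs_mul, abs_neg, abs_of_pos hXpos, abs_of_pos huv]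
  have hT1low : |ξ| / (4 * P2) ≤ |(-X * ξ / (t * v))| := by
    rw [hT1, div_le_div_iff₀ (by positivity) huv]
    have h1 : 1 ≤ X * P2 := by
      rw [← inv_mul_cancel₀ (ne_of_gt hP2pos)]
      exact mul_le_mul_of_nonneg_right hXlow (le_of_lt hP2pos)
    nlinarith [abs_nonneg ξ]
  have hT2up : |(X - h^2 * Y) * (h / v)| ≤ |ξ| / (8 * P2) := by
    rw [abs_mul, abs_of_nonneg hhv0]
    calc |X - h^2 * Y| * (h / v) ≤ (|ξ| / (16 * P2)) * 2 := by
          apply mul_le_mul hD2 hhv hhv0 (by positivity)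
      _ = |ξ| / (8 * P2) := by ring
  have habs : |(-X * ξ / (t * v))| ≤ |t ^ (α-3) - h^3 * v ^ (α-3)| + |(X - h^2 * Y) * (h / v)| := by
    calc |(-X * ξ / (t * v))|
        = |(t ^ (α-3) - h^3 * v ^ (α-3)) - (X - h^2 * Y) * (h / v)| := by rw [hid]; ring_nf
      _ ≤ _ := abs_sub _ _
  have h4P2 : |ξ| / (4 * P2) = 2 * (|ξ| / (8 * P2)) := by ring
  linarith
lemma sign_split {α h ξ a b : ℝ} (hh0 : 0 < h) (hh1 : h ≤ 1) (hξ : ξ ≠ 0) (hab : a ≤ b)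
    (hmem : ∀ t ∈ Icc a b, 1/2 ≤ t ∧ t ≤ 2 ∧ 1/2 ≤ h*t - ξ ∧ h*t - ξ ≤ 2) :
    ∃ m : ℝ,
      ((∀ t ∈ Icc a b, t ≤ m → 0 ≤ t ^ (α-3) - h^3 * (h*t - ξ) ^ (α-3)) ∧
        (∀ t ∈ Icc a b, m ≤ t → t ^ (α-3) - h^3 * (h*t - ξ) ^ (α-3) ≤ 0)) ∨
      ((∀ t ∈ Icc a b, t ≤ m → t ^ (α-3) - h^3 * (h*t - ξ) ^ (α-3) ≤ 0) ∧
        (∀ t ∈ Icc a b, m ≤ t → 0 ≤ t ^ (α-3) - h^3 * (h*t - ξ) ^ (α-3))) := by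
  set D3 : ℝ → ℝ := fun t => t ^ (α-3) - h^3 * (h*t - ξ) ^ (α-3) with hD3_def
  by_cases hα3 : α = 3
  · refine ⟨b + 1, Or.inl ⟨?_, ?_⟩⟩
    · intro t ht _
      have h3 : α - 3 = 0 := by rw [hα3]; ring
      have hd : D3 t = 1 - h^3 := by
        rw [hD3_def]; simp only [h3, Real.rpow_zero]; ring
      show (0:ℝ) ≤ D3 t
      rw [hd]
      nlinarith [pow_le_one₀ (le_of_lt hh0) hh1 (n := 3)]
    · intro t ht hle
      exfalso; have := ht.2; linarith
  -- general case
  have hβ : α - 3 ≠ 0 := fun hc => hα3 (by linarith [sub_eq_zero.mp hc])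
  set W : ℝ → ℝ := fun t => (α-3) * (Real.log t - Real.log (h*t - ξ)) - 3 * Real.log h
    with hW_def
  have hpos : ∀ t ∈ Icc a b, 0 < t ∧ 0 < h*t - ξ := by
    intro t ht
    obtain ⟨h1, _, h3, _⟩ := hmem t ht
    exact ⟨by linarith, by linarith⟩
  -- W controls the sign of D3
  have hWD : ∀ t ∈ Icc a b, (0 ≤ W t → 0 ≤ D3 t) ∧ (W t ≤ 0 → D3 t ≤ 0) := by
    intro t ht
    obtain ⟨ht0, hv0⟩ := hpos t ht
    have e1 : t ^ (α-3) = Real.exp (Real.log t * (α-3)) := Real.rpow_def_of_pos ht0 _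
    have e2 : (h*t - ξ) ^ (α-3) = Real.exp (Real.log (h*t - ξ) * (α-3)) :=
      Real.rpow_def_of_pos hv0 _
    have e3 : h ^ 3 = Real.exp (Real.log h * 3) := by
      rw [← Real.rpow_natCast h 3, Real.rpow_def_of_pos hh0]
      norm_num
    have hD3eq : D3 t = Real.exp (Real.log t * (α-3))
        - Real.exp (Real.log h * 3 + Real.log (h*t - ξ) * (α-3)) := by
      rw [hD3_def]
      simp only
      rw [e1, e2, e3, Real.exp_add]
    have hWeq : W t = (Real.log t * (α-3)) - (Real.log h * 3 + Real.log (h*t - ξ) * (α-3)) := by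
      rw [hW_def]; ring
    constructor
    · intro hW
      rw [hD3eq]
      have : Real.log h * 3 + Real.log (h*t - ξ) * (α-3) ≤ Real.log t * (α-3) := by
        rw [hWeq] at hW; linarith
      have := Real.exp_le_exp.mpr this
      linarith
    · intro hW
      rw [hD3eq]
      have : Real.log t * (α-3) ≤ Real.log h * 3 + Real.log (h*t - ξ) * (α-3) := by
        rw [hWeq] at hW; linarith
      have := Real.exp_le_exp.mpr this
      linarith
  -- derivative of W
  set Wd : ℝ → ℝ := fun t => (α-3) * (t⁻¹ - (h*t - ξ)⁻¹ * h) with hWd_def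
  have hWderiv : ∀ t ∈ Icc a b, HasDerivAt W (Wd t) t := by
    intro t ht
    obtain ⟨ht0, hv0⟩ := hpos t ht
    have hlin : HasDerivAt (fun s : ℝ => h*s - ξ) h t := by
      simpa using ((hasDerivAt_id t).const_mul h).sub_const ξ
    have hlog1 : HasDerivAt (fun s : ℝ => Real.log s) t⁻¹ t := Real.hasDerivAt_log (ne_of_gt ht0)
    have hlog2 : HasDerivAt (fun s : ℝ => Real.log (h*s - ξ)) ((h*t - ξ)⁻¹ * h) t := by
      have := (Real.hasDerivAt_log (ne_of_gt hv0)).comp t hlin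
      exact this
    have := ((hlog1.sub hlog2).const_mul (α-3)).sub_const (3 * Real.log h)
    simpa [hW_def, hWd_def] using this
  have hWdc : ContinuousOn Wd (Icc a b) := by
    apply ContinuousOn.mul continuousOn_const
    apply ContinuousOn.sub
    · exact ContinuousOn.inv₀ continuousOn_id (fun t ht => ne_of_gt (hpos t ht).1)
    · apply ContinuousOn.mul _ continuousOn_const
      exact ContinuousOn.inv₀
        (Continuous.continuousOn (by continuity)) (fun t ht => ne_of_gt (hpos t ht).2)
  have hWdeq : ∀ t ∈ Icc a b, Wd t = -((α-3) * ξ) / (t * (h*t - ξ)) := by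
    intro t ht
    obtain ⟨ht0, hv0⟩ := hpos t ht
    rw [hWd_def]
    have hw : t * h - ξ ≠ 0 := by rw [mul_comm]; exact ne_of_gt hv0
    have hw' : h * t - ξ ≠ 0 := ne_of_gt hv0
    field_simp
    ring
  have hWc : ContinuousOn W (Icc a b) :=
    fun t ht => ((hWderiv t ht).continuousAt).continuousWithinAt
  -- W is monotone or antitone
  rcases le_or_gt 0 (-((α-3) * ξ)) with hsgn | hsgn
  · -- Wd ≥ 0, W nondecreasing, D3 goes from ≤0 to ≥0 : second branch
    have hWd0 : ∀ t ∈ Icc a b, 0 ≤ Wd t := by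
      intro t ht
      obtain ⟨ht0, hv0⟩ := hpos t ht
      rw [hWdeq t ht]
      positivity
    have hmono : ∀ s ∈ Icc a b, ∀ t ∈ Icc a b, s ≤ t → W s ≤ W t := by
      intro s hs t ht hst
      have hsub : Icc s t ⊆ Icc a b := fun x hx => ⟨le_trans hs.1 hx.1, le_trans hx.2 ht.2⟩
      have := ftc_lb (F := W) (F' := Wd) (κ := 0) hst
        (fun x hx => hWderiv x (hsub hx)) (hWdc.mono hsub) (fun x hx => hWd0 x (hsub hx))
      linarith
    by_cases hWb : W b ≤ 0
    · refine ⟨b + 1, Or.inr ⟨?_, ?_⟩⟩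
      · intro t ht _
        exact (hWD t ht).2 (le_trans (hmono t ht b ⟨hab, le_refl b⟩ ht.2) hWb)
      · intro t ht hle; exfalso; have := ht.2; linarith
    by_cases hWa : 0 ≤ W a
    · refine ⟨a - 1, Or.inr ⟨?_, ?_⟩⟩
      · intro t ht hle; exfalso; have := ht.1; linarith
      · intro t ht _
        exact (hWD t ht).1 (le_trans hWa (hmono a ⟨le_refl a, hab⟩ t ht ht.1))
    push_neg at hWb hWa
    obtain ⟨m, hmmem, hmW⟩ := intermediate_value_Icc hab hWc
      (⟨le_of_lt hWa, le_of_lt hWb⟩ : (0:ℝ) ∈ Icc (W a) (W b))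
    refine ⟨m, Or.inr ⟨?_, ?_⟩⟩
    · intro t ht hle
      exact (hWD t ht).2 (by rw [← hmW]; exact hmono t ht m hmmem hle)
    · intro t ht hle
      exact (hWD t ht).1 (by rw [← hmW]; exact hmono m hmmem t ht hle)
  · -- Wd ≤ 0, W nonincreasing : first branch
    have hWd0 : ∀ t ∈ Icc a b, Wd t ≤ 0 := by
      intro t ht
      obtain ⟨ht0, hv0⟩ := hpos t ht
      rw [hWdeq t ht]
      apply div_nonpos_of_nonpos_of_nonneg (by linarith) (by positivity)
    have hmono : ∀ s ∈ Icc a b, ∀ t ∈ Icc a b, s ≤ t → W t ≤ W s := by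
      intro s hs t ht hst
      have hsub : Icc s t ⊆ Icc a b := fun x hx => ⟨le_trans hs.1 hx.1, le_trans hx.2 ht.2⟩
      have := ftc_lb (F := fun x => -W x) (F' := fun x => -Wd x) (κ := 0) hst
        (fun x hx => (hWderiv x (hsub hx)).neg) ((hWdc.mono hsub).neg)
        (fun x hx => by simpa using hWd0 x (hsub hx))
      simp only [zero_mul] at this
      linarith
    by_cases hWb : 0 ≤ W b
    · refine ⟨b + 1, Or.inl ⟨?_, ?_⟩⟩
      · intro t ht _
        exact (hWD t ht).1 (le_trans hWb (hmono t ht b ⟨hab, le_refl b⟩ ht.2))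
      · intro t ht hle; exfalso; have := ht.2; linarith
    by_cases hWa : W a ≤ 0
    · refine ⟨a - 1, Or.inl ⟨?_, ?_⟩⟩
      · intro t ht hle; exfalso; have := ht.1; linarith
      · intro t ht _
        exact (hWD t ht).2 (le_trans (hmono a ⟨le_refl a, hab⟩ t ht ht.1) hWa)
    push_neg at hWb hWa
    obtain ⟨m, hmmem, hmW⟩ := intermediate_value_Icc' hab hWc
      (⟨le_of_lt hWb, le_of_lt hWa⟩ : (0:ℝ) ∈ Icc (W b) (W a))
    refine ⟨m, Or.inl ⟨?_, ?_⟩⟩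
    · intro t ht hle
      exact (hWD t ht).1 (by rw [← hmW]; exact hmono t ht m hmmem hle)
    · intro t ht hle
      exact (hWD t ht).2 (by rw [← hmW]; exact hmono m hmmem t ht hle)
lemma mul_nonneg_of_nonpos_nonpos' {a b : ℝ} (ha : a ≤ 0) (hb : b ≤ 0) : 0 ≤ a * b := by
  nlinarith

lemma mul_nonpos_of_nonpos_of_nonneg' {a b : ℝ} (ha : a ≤ 0) (hb : 0 ≤ b) : a * b ≤ 0 := by
  nlinarith

lemma mul_nonpos_of_nonneg_of_nonpos' {a b : ℝ} (ha : 0 ≤ a) (hb : b ≤ 0) : a * b ≤ 0 := by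
  nlinarith

set_option maxHeartbeats 1000000 in
/-- key oscillatory integral estimate: for `α > 0`, `α ∉ {1,2}`, `ψ`
smooth and supported in `[1/2,2]`, and `λ = α/4`, the oscillatory integral
`∫ e^{i(wη + 2^{αl}η^α − 2^{αl}(hη−ξ)^α)} (ψ(η)/η)(ψ(hη−ξ)/(hη−ξ)) dη`
is bounded by `C (𝟙_{[−2^{−λl},2^{−λl}]}(ξ) + 2^{−λl} 𝟙_{[−2,2]}(ξ))` for all `ξ, w ∈ ℝ`,
`0 < h ≤ 1` and integers `l > 0`. -/
theorem statement8 (α : ℝ) (hα : 0 < α) (hα1 : α ≠ 1) (hα2 : α ≠ 2)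
    (ψ : ℝ → ℝ) (hψ_smooth : ContDiff ℝ (⊤ : ℕ∞) ψ)
    (hψ_supp : Function.support ψ ⊆ Set.Icc (1/2 : ℝ) 2) :
    ∃ C : ℝ, 0 < C ∧
      ∀ (ξ w h : ℝ), 0 < h → h ≤ 1 → ∀ l : ℤ, 0 < l →
        ‖∫ η : ℝ,
            Complex.exp (Complex.I *
              ((w * η + (2 : ℝ) ^ (α * (l : ℝ)) * η ^ α -
                  (2 : ℝ) ^ (α * (l : ℝ)) * (h * η - ξ) ^ α : ℝ) : ℂ)) *
              ((ψ η / η : ℝ) : ℂ) * ((ψ (h * η - ξ) / (h * η - ξ) : ℝ) : ℂ)‖ ≤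
          C * (Set.indicator
                (Set.Icc (-((2 : ℝ) ^ (-((α / 4) * (l : ℝ))))) ((2 : ℝ) ^ (-((α / 4) * (l : ℝ)))))
                (fun _ => (1 : ℝ)) ξ +
              (2 : ℝ) ^ (-((α / 4) * (l : ℝ))) *
                Set.indicator (Set.Icc (-2 : ℝ) 2) (fun _ => (1 : ℝ)) ξ) := by
  -- the amplitude building block g = ψ(y)/y
  set g : ℝ → ℝ := fun y => ψ y / y with hg_def
  have hg_zero : ∀ x, x ∉ Icc (1/2 : ℝ) 2 → g x = 0 := by
    intro x hx
    have hψ0 : ψ x = 0 := by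
      by_contra hc
      exact hx (hψ_supp hc)
    rw [hg_def]; simp [hψ0]
  have hg_smooth : ContDiff ℝ (⊤ : ℕ∞) g := by
    rw [contDiff_iff_contDiffAt]
    intro x
    by_cases hx : x = 0
    · apply ContDiffAt.congr_of_eventuallyEq contDiffAt_const
      have hmem : Set.Ioo (-(1/2) : ℝ) (1/2) ∈ nhds x := by
        rw [hx]; exact Ioo_mem_nhds (by norm_num) (by norm_num)
      apply Filter.eventuallyEq_of_mem hmem
      intro y hy
      exact hg_zero y (fun hmem' => by
        have := hmem'.1; have := hy.2; simp at *; linarith)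
    · exact (hψ_smooth.contDiffAt).div contDiffAt_id hx
  have hgc : Continuous g := hg_smooth.continuous
  have hgd : Differentiable ℝ g := hg_smooth.differentiable (by simp)
  have hg'c : Continuous (deriv g) := hg_smooth.continuous_deriv (by simp)
  have hgcs : HasCompactSupport g := HasCompactSupport.intro isCompact_Icc hg_zero
  have hg'cs : HasCompactSupport (deriv g) := hgcs.deriv
  obtain ⟨M1, hM1⟩ := hgcs.exists_bound_of_continuous hgc
  obtain ⟨M2, hM2⟩ := hg'cs.exists_bound_of_continuous hg'c
  set M : ℝ := max M1 M2 with hM_def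
  have hMg : ∀ x, |g x| ≤ M := fun x => le_trans (hM1 x) (le_max_left _ _)
  have hMg' : ∀ x, |deriv g x| ≤ M := fun x => le_trans (hM2 x) (le_max_right _ _)
  have hM0 : 0 ≤ M := le_trans (abs_nonneg (g 0)) (hMg 0)
  set Ma : ℝ := M * M with hMa_def
  set Va : ℝ := 2 * (M * M) with hVa_def
  have hMa0 : 0 ≤ Ma := by positivity
  have hVa0 : 0 ≤ Va := by positivity
  -- constants depending only on α
  set P2 : ℝ := (2 : ℝ) ^ |α - 2| with hP2_def
  have hP2pos : 0 < P2 := Real.rpow_pos_of_pos (by norm_num) _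
  set K2 : ℝ := α * (α - 1) with hK2_def
  set K3 : ℝ := α * (α - 1) * (α - 2) with hK3_def
  have hK2ne : K2 ≠ 0 := by
    rw [hK2_def]
    have h1 : α - 1 ≠ 0 := sub_ne_zero.mpr hα1
    positivity
  have hK3ne : K3 ≠ 0 := by
    rw [hK3_def]
    have h1 : α - 1 ≠ 0 := sub_ne_zero.mpr hα1
    have h2 : α - 2 ≠ 0 := sub_ne_zero.mpr hα2
    positivity
  have hK2abs : 0 < |K2| := abs_pos.mpr hK2ne
  have hK3abs : 0 < |K3| := abs_pos.mpr hK3ne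
  set s0 : ℝ := Real.sqrt (|K2| / (16 * P2)) with hs0_def
  have hs0pos : 0 < s0 := Real.sqrt_pos.mpr (by positivity)
  have hs0sq : s0 ^ 2 = |K2| / (16 * P2) := Real.sq_sqrt (by positivity)
  set c1 : ℝ := s0⁻¹ with hc1_def
  set c2 : ℝ := |K2| / |K3| with hc2_def
  have hc1pos : 0 < c1 := by positivity
  have hc2pos : 0 < c2 := by positivity
  set Cm : ℝ := (8 * (4 * Ma + 2 * Va) + 8 * Ma) * c1 + 4 * Ma * c2 with hCm_def
  have hCm0 : 0 ≤ Cm := by positivity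
  have hC0 : (0:ℝ) < 2 * Ma + Cm + 1 := by positivity
  refine ⟨2 * Ma + Cm + 1, hC0, ?_⟩
  intro ξ w h hh0 hh1 l hl
  set A : ℝ := (2 : ℝ) ^ (α * (l : ℝ)) with hA_def
  set ε : ℝ := (2 : ℝ) ^ (-((α / 4) * (l : ℝ))) with hε_def
  have hA0 : 0 < A := Real.rpow_pos_of_pos (by norm_num) _
  have hε0 : 0 < ε := Real.rpow_pos_of_pos (by norm_num) _
  have hl1 : (1 : ℝ) ≤ (l : ℝ) := by exact_mod_cast hl
  have hA1 : 1 ≤ A := by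
    rw [hA_def]
    calc (1:ℝ) = (2:ℝ) ^ (0:ℝ) := (Real.rpow_zero 2).symm
      _ ≤ (2:ℝ) ^ (α * (l : ℝ)) :=
          Real.rpow_le_rpow_of_exponent_le one_le_two
            (mul_nonneg (le_of_lt hα) (by linarith))
  have hεA : ε = A ^ (-(1/4) : ℝ) := by
    rw [hε_def, hA_def, ← Real.rpow_mul (by norm_num : (0:ℝ) ≤ 2)]
    congr 1
    ring
  -- amplitude and phase
  set amp : ℝ → ℝ := fun t => g t * g (h * t - ξ) with hamp_def
  set amp' : ℝ → ℝ := fun t => deriv g t * g (h * t - ξ) + g t * (deriv g (h * t - ξ) * h)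
    with hamp'_def
  set φ : ℝ → ℝ := fun t => w * t + A * t ^ α - A * (h * t - ξ) ^ α with hφ_def
  set G : ℝ → ℂ := fun t => Complex.exp (Complex.I * (φ t : ℂ)) * ((amp t : ℝ) : ℂ) with hG_def
  have hGeq : (fun η : ℝ => Complex.exp (Complex.I *
        ((w * η + A * η ^ α - A * (h * η - ξ) ^ α : ℝ) : ℂ)) *
          ((ψ η / η : ℝ) : ℂ) * ((ψ (h * η - ξ) / (h * η - ξ) : ℝ) : ℂ)) = G := by
    funext η
    rw [hG_def]
    simp only [hamp_def, hφ_def, hg_def]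
    push_cast
    ring
  rw [hGeq]
  -- support interval
  set aa : ℝ := max (1/2) ((1/2 + ξ) / h) with haa_def
  set bb : ℝ := min 2 ((2 + ξ) / h) with hbb_def
  have hGzero : ∀ t, t ∉ Icc aa bb → G t = 0 := by
    intro t ht
    have hampz : amp t = 0 := by
      rw [hamp_def]
      by_contra hc
      have h1 : g t ≠ 0 := fun hz => hc (by simp [hz])
      have h2 : g (h * t - ξ) ≠ 0 := fun hz => hc (by simp [hz])
      have ht1 : t ∈ Icc (1/2 : ℝ) 2 := by
        by_contra hcc; exact h1 (hg_zero t hcc)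
      have ht2 : h * t - ξ ∈ Icc (1/2 : ℝ) 2 := by
        by_contra hcc; exact h2 (hg_zero _ hcc)
      apply ht
      constructor
      · apply max_le ht1.1
        rw [div_le_iff₀ hh0]
        have := ht2.1; linarith [mul_comm t h]
      · apply le_min ht1.2
        rw [le_div_iff₀ hh0]
        have := ht2.2; linarith [mul_comm t h]
    show Complex.exp (Complex.I * (φ t : ℂ)) * ((amp t : ℝ) : ℂ) = 0
    rw [hampz]
    simp
  have hind_nonneg : (0:ℝ) ≤ Set.indicator (Set.Icc (-ε) ε) (fun _ => (1:ℝ)) ξ +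
      ε * Set.indicator (Set.Icc (-2 : ℝ) 2) (fun _ => (1:ℝ)) ξ := by
    have i1 : (0:ℝ) ≤ Set.indicator (Set.Icc (-ε) ε) (fun _ => (1:ℝ)) ξ :=
      Set.indicator_nonneg (fun _ _ => zero_le_one) ξ
    have i2 : (0:ℝ) ≤ Set.indicator (Set.Icc (-2 : ℝ) 2) (fun _ => (1:ℝ)) ξ :=
      Set.indicator_nonneg (fun _ _ => zero_le_one) ξ
    have := mul_nonneg (le_of_lt hε0) i2
    linarith
  by_cases hab : aa ≤ bb
  swap
  · -- empty support
    have hz : ∀ t : ℝ, G t = 0 := by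
      intro t
      apply hGzero
      intro hmem
      exact hab (le_trans hmem.1 hmem.2)
    have : (∫ t : ℝ, G t) = 0 := by
      rw [show G = (fun _ : ℝ => (0:ℂ)) from funext hz]
      simp
    rw [this, norm_zero]
    exact mul_nonneg (le_of_lt hC0) hind_nonneg
  -- reduce to interval integral
  have hred : (∫ t : ℝ, G t) = ∫ t in aa..bb, G t := by
    rw [intervalIntegral.integral_of_le hab, ← integral_Icc_eq_integral_Ioc]
    exact (setIntegral_eq_integral_of_forall_compl_eq_zero hGzero).symm
  have hmemf : ∀ t ∈ Icc aa bb, 1/2 ≤ t ∧ t ≤ 2 ∧ 1/2 ≤ h * t - ξ ∧ h * t - ξ ≤ 2 := by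
    intro t ht
    have h1 : (1/2 : ℝ) ≤ t := le_trans (le_max_left _ _) ht.1
    have h2 : t ≤ 2 := le_trans ht.2 (min_le_left _ _)
    have h3 : (1/2 + ξ) / h ≤ t := le_trans (le_max_right _ _) ht.1
    have h4 : t ≤ (2 + ξ) / h := le_trans ht.2 (min_le_right _ _)
    rw [div_le_iff₀ hh0] at h3
    rw [le_div_iff₀ hh0] at h4
    have hcomm : t * h = h * t := mul_comm t h
    exact ⟨h1, h2, by linarith, by linarith⟩
  have hlen : bb - aa ≤ 2 := by
    have h1 : (1/2 : ℝ) ≤ aa := le_max_left _ _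
    have h2 : bb ≤ 2 := min_le_left _ _
    linarith
  -- global bounds on amplitude
  have hampM : ∀ t, |amp t| ≤ Ma := by
    intro t
    rw [hamp_def, hMa_def]
    calc |g t * g (h * t - ξ)| = |g t| * |g (h * t - ξ)| := abs_mul _ _
      _ ≤ M * M := mul_le_mul (hMg t) (hMg _) (abs_nonneg _) hM0
  have hampV : ∀ t, |amp' t| ≤ Va := by
    intro t
    rw [hamp'_def, hVa_def]
    have e1 : |deriv g t * g (h * t - ξ)| ≤ M * M :=
      (abs_mul _ _).le.trans (mul_le_mul (hMg' t) (hMg _) (abs_nonneg _) hM0)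
    have e2 : |g t * (deriv g (h * t - ξ) * h)| ≤ M * M := by
      rw [abs_mul, abs_mul, abs_of_pos hh0]
      have hstep : |deriv g (h * t - ξ)| * h ≤ M * 1 :=
        mul_le_mul (hMg' _) hh1 (le_of_lt hh0) hM0
      calc |g t| * (|deriv g (h * t - ξ)| * h) ≤ M * (M * 1) :=
            mul_le_mul (hMg t) hstep
              (mul_nonneg (abs_nonneg _) (le_of_lt hh0)) hM0
        _ = M * M := by ring
    calc |deriv g t * g (h * t - ξ) + g t * (deriv g (h * t - ξ) * h)|
        ≤ |deriv g t * g (h * t - ξ)| + |g t * (deriv g (h * t - ξ) * h)| := abs_add_le _ _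
      _ ≤ 2 * (M * M) := by linarith
  have hampd : ∀ t : ℝ, HasDerivAt amp (amp' t) t := by
    intro t
    have hlin : HasDerivAt (fun s : ℝ => h * s - ξ) h t := by
      simpa using ((hasDerivAt_id t).const_mul h).sub_const ξ
    have h1 : HasDerivAt g (deriv g t) t := (hgd t).hasDerivAt
    have h2 : HasDerivAt (fun s : ℝ => g (h * s - ξ)) (deriv g (h * t - ξ) * h) t := by
      have := ((hgd (h * t - ξ)).hasDerivAt).comp t hlin
      exact this
    exact h1.mul h2
  have hampc : Continuous amp := by
    rw [hamp_def]
    exact hgc.mul (hgc.comp (((continuous_const.mul continuous_id).sub continuous_const : Continuous (fun s : ℝ => h * s - ξ))))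
  have hamp'c : Continuous amp' := by
    rw [hamp'_def]
    apply Continuous.add
    · exact hg'c.mul (hgc.comp (((continuous_const.mul continuous_id).sub continuous_const : Continuous (fun s : ℝ => h * s - ξ))))
    · exact hgc.mul ((hg'c.comp (((continuous_const.mul continuous_id).sub continuous_const : Continuous (fun s : ℝ => h * s - ξ)))).mul continuous_const)
  -- trivial bound
  have htriv : ‖∫ t in aa..bb, G t‖ ≤ Ma * 2 := by
    have hb := intervalIntegral.norm_integral_le_of_norm_le_const (C := Ma) (a := aa) (b := bb)
      (f := G) (fun x _ => by
        rw [hG_def]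
        show ‖Complex.exp (Complex.I * (φ x : ℂ)) * ((amp x : ℝ) : ℂ)‖ ≤ Ma
        rw [norm_mul, norm_exp_I_mul, one_mul, Complex.norm_real]
        exact hampM x)
    rw [abs_of_nonneg (by linarith)] at hb
    calc ‖∫ t in aa..bb, G t‖ ≤ Ma * (bb - aa) := hb
      _ ≤ Ma * 2 := mul_le_mul_of_nonneg_left hlen hMa0
  rw [hred]
  by_cases hξε : |ξ| ≤ ε
  · -- small ξ : trivial bound against indicator 1
    have hmem : ξ ∈ Set.Icc (-ε) ε := by
      rcases abs_le.mp hξε with ⟨h1, h2⟩; exact ⟨h1, h2⟩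
    rw [Set.indicator_of_mem hmem]
    have i2 : (0:ℝ) ≤ Set.indicator (Set.Icc (-2 : ℝ) 2) (fun _ => (1:ℝ)) ξ :=
      Set.indicator_nonneg (fun _ _ => zero_le_one) ξ
    have hrhs : 2 * Ma + Cm + 1
        ≤ (2 * Ma + Cm + 1) * ((fun _ => (1:ℝ)) ξ +
            ε * Set.indicator (Set.Icc (-2 : ℝ) 2) (fun _ => (1:ℝ)) ξ) := by
      have hone : (1:ℝ) ≤ (fun _ => (1:ℝ)) ξ +
          ε * Set.indicator (Set.Icc (-2 : ℝ) 2) (fun _ => (1:ℝ)) ξ := by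
        simp only
        have := mul_nonneg (le_of_lt hε0) i2
        linarith
      calc 2 * Ma + Cm + 1 = (2 * Ma + Cm + 1) * 1 := (mul_one _).symm
        _ ≤ _ := mul_le_mul_of_nonneg_left hone (le_of_lt hC0)
    calc ‖∫ t in aa..bb, G t‖ ≤ Ma * 2 := htriv
      _ ≤ 2 * Ma + Cm + 1 := by linarith
      _ ≤ _ := hrhs
  push_neg at hξε
  by_cases hξ2 : |ξ| ≤ 2
  swap
  · -- impossible : support forces |ξ| ≤ 2
    exfalso
    obtain ⟨ha1, ha2, hv1, hv2⟩ := hmemf aa ⟨le_refl aa, hab⟩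
    have haa0 : (0:ℝ) < aa := by linarith
    have hha : h * aa ≤ 2 := by
      calc h * aa ≤ 1 * aa := mul_le_mul_of_nonneg_right hh1 (le_of_lt haa0)
        _ = aa := one_mul _
        _ ≤ 2 := ha2
    have hha0 : 0 < h * aa := mul_pos hh0 haa0
    have : |ξ| ≤ 2 := abs_le.mpr ⟨by linarith, by linarith⟩
    linarith
  -- main branch
  have hξ0 : ξ ≠ 0 := by
    intro hc; rw [hc, abs_zero] at hξε; linarith
  have hξabs : 0 < |ξ| := abs_pos.mpr hξ0
  have hεξ : ε ≤ |ξ| := le_of_lt hξε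
  -- indicators
  have hind1 : Set.indicator (Set.Icc (-ε) ε) (fun _ => (1:ℝ)) ξ = 0 := by
    apply Set.indicator_of_notMem
    intro hmem
    have : |ξ| ≤ ε := abs_le.mpr ⟨hmem.1, hmem.2⟩
    linarith
  have hind2 : Set.indicator (Set.Icc (-2 : ℝ) 2) (fun _ => (1:ℝ)) ξ = 1 := by
    apply Set.indicator_of_mem
    rcases abs_le.mp hξ2 with ⟨h1, h2⟩; exact ⟨h1, h2⟩
  rw [hind1, hind2]
  -- the quantity Q
  have hAξpos : 0 < A * |ξ| := mul_pos hA0 hξabs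
  set Q : ℝ := (A * |ξ|) ^ ((1:ℝ)/3) with hQ_def
  have hQ0 : 0 < Q := Real.rpow_pos_of_pos hAξpos _
  have hQcube : Q ^ 3 = A * |ξ| := by
    rw [hQ_def, ← Real.rpow_natCast ((A * |ξ|) ^ ((1:ℝ)/3)) 3,
      ← Real.rpow_mul (le_of_lt hAξpos)]
    norm_num
  have hQquarter : A ^ ((1:ℝ)/4) ≤ Q := by
    have h1 : A * ε ≤ A * |ξ| := mul_le_mul_of_nonneg_left hεξ (le_of_lt hA0)
    have h2 : A * ε = A ^ ((3:ℝ)/4) := by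
      rw [hεA, show ((3:ℝ)/4) = 1 + (-(1/4)) by norm_num, Real.rpow_add hA0, Real.rpow_one]
    have h3 : (A ^ ((3:ℝ)/4)) ^ ((1:ℝ)/3) ≤ Q := by
      rw [hQ_def]
      exact Real.rpow_le_rpow (Real.rpow_nonneg (le_of_lt hA0) _)
        (by rw [← h2]; exact h1) (by norm_num)
    rwa [← Real.rpow_mul (le_of_lt hA0), show ((3:ℝ)/4) * ((1:ℝ)/3) = (1:ℝ)/4 by norm_num] at h3
  have hA14 : (1:ℝ) ≤ A ^ ((1:ℝ)/4) := by
    calc (1:ℝ) = (1:ℝ) ^ ((1:ℝ)/4) := (Real.one_rpow _).symm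
      _ ≤ A ^ ((1:ℝ)/4) := Real.rpow_le_rpow zero_le_one hA1 (by norm_num)
  have hQ1 : 1 ≤ Q := le_trans hA14 hQquarter
  have hQε : 1 ≤ ε * Q := by
    have he : ε * A ^ ((1:ℝ)/4) = 1 := by
      rw [hεA, ← Real.rpow_add hA0]
      norm_num
    calc (1:ℝ) = ε * A ^ ((1:ℝ)/4) := he.symm
      _ ≤ ε * Q := mul_le_mul_of_nonneg_left hQquarter (le_of_lt hε0)
  have hQinv : Q⁻¹ ≤ ε := by
    rw [← one_div, div_le_iff₀ hQ0]
    linarith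
  -- thresholds
  have h16P2 : (0:ℝ) < 16 * P2 := by linarith
  have h8P2 : (0:ℝ) < 8 * P2 := by linarith
  set σ : ℝ := s0 * Q with hσ_def
  have hσpos : 0 < σ := mul_pos hs0pos hQ0
  set T2 : ℝ := σ ^ 2 with hT2_def
  have hT2pos : 0 < T2 := pow_pos hσpos 2
  set T3 : ℝ := |K3| * (A * |ξ|) / (8 * P2) with hT3_def
  have hT3pos : 0 < T3 := div_pos (mul_pos hK3abs hAξpos) h8P2
  have hT2eq : T2 = |K2| * (Q ^ 2 / (16 * P2)) := by
    rw [hT2_def, hσ_def, mul_pow, hs0sq]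
    field_simp
  -- phase derivatives
  set φ1 : ℝ → ℝ := fun t => w + A * α * t ^ (α - 1) - A * (α * h) * (h * t - ξ) ^ (α - 1)
    with hφ1_def
  set φ2 : ℝ → ℝ := fun t => A * K2 * (t ^ (α - 2) - h ^ 2 * (h * t - ξ) ^ (α - 2)) with hφ2_def
  set φ3 : ℝ → ℝ := fun t => A * K3 * (t ^ (α - 3) - h ^ 3 * (h * t - ξ) ^ (α - 3)) with hφ3_def
  have hbase : ∀ t ∈ Icc aa bb, t ≠ 0 ∧ h * t - ξ ≠ 0 := by
    intro t ht
    obtain ⟨h1, _, h3, _⟩ := hmemf t ht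
    exact ⟨by intro hc; rw [hc] at h1; linarith, by intro hc; rw [hc] at h3; linarith⟩
  have hlin : ∀ t : ℝ, HasDerivAt (fun s : ℝ => h * s - ξ) h t := by
    intro t
    simpa using ((hasDerivAt_id t).const_mul h).sub_const ξ
  have hd1 : ∀ t ∈ Icc aa bb, HasDerivAt φ (φ1 t) t := by
    intro t ht
    obtain ⟨ht0, hv0⟩ := hbase t ht
    have p1 : HasDerivAt (fun s : ℝ => s ^ α) (α * t ^ (α - 1)) t :=
      Real.hasDerivAt_rpow_const (Or.inl ht0)
    have p2 : HasDerivAt (fun s : ℝ => (h * s - ξ) ^ α) (h * α * (h * t - ξ) ^ (α - 1)) t :=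
      (hlin t).rpow_const (Or.inl hv0)
    have pw : HasDerivAt (fun s : ℝ => w * s) w t := by
      simpa using (hasDerivAt_id t).const_mul w
    have := (pw.add (p1.const_mul A)).sub (p2.const_mul A)
    rw [hφ_def, hφ1_def]
    refine this.congr_deriv ?_
    ring
  have hd2 : ∀ t ∈ Icc aa bb, HasDerivAt φ1 (φ2 t) t := by
    intro t ht
    obtain ⟨ht0, hv0⟩ := hbase t ht
    have p1 : HasDerivAt (fun s : ℝ => s ^ (α - 1)) ((α - 1) * t ^ (α - 1 - 1)) t :=
      Real.hasDerivAt_rpow_const (Or.inl ht0)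
    have p2 : HasDerivAt (fun s : ℝ => (h * s - ξ) ^ (α - 1))
        (h * (α - 1) * (h * t - ξ) ^ (α - 1 - 1)) t :=
      (hlin t).rpow_const (Or.inl hv0)
    have := ((hasDerivAt_const t w).add (p1.const_mul (A * α))).sub
      (p2.const_mul (A * (α * h)))
    rw [hφ1_def, hφ2_def]
    refine this.congr_deriv ?_
    rw [show α - 1 - 1 = α - 2 by ring, hK2_def]
    ring
  have hd3 : ∀ t ∈ Icc aa bb, HasDerivAt φ2 (φ3 t) t := by
    intro t ht
    obtain ⟨ht0, hv0⟩ := hbase t ht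
    have p1 : HasDerivAt (fun s : ℝ => s ^ (α - 2)) ((α - 2) * t ^ (α - 2 - 1)) t :=
      Real.hasDerivAt_rpow_const (Or.inl ht0)
    have p2 : HasDerivAt (fun s : ℝ => (h * s - ξ) ^ (α - 2))
        (h * (α - 2) * (h * t - ξ) ^ (α - 2 - 1)) t :=
      (hlin t).rpow_const (Or.inl hv0)
    have := (p1.sub (p2.const_mul (h ^ 2))).const_mul (A * K2)
    rw [hφ2_def, hφ3_def]
    refine this.congr_deriv ?_
    rw [show α - 2 - 1 = α - 3 by ring, hK2_def, hK3_def]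
    ring
  have hφ1c : ContinuousOn φ1 (Icc aa bb) :=
    fun t ht => ((hd2 t ht).continuousAt).continuousWithinAt
  have hφ2c : ContinuousOn φ2 (Icc aa bb) :=
    fun t ht => ((hd3 t ht).continuousAt).continuousWithinAt
  have hφ3c : ContinuousOn φ3 (Icc aa bb) := by
    rw [hφ3_def]
    apply ContinuousOn.mul continuousOn_const
    apply ContinuousOn.sub
    · exact ContinuousOn.rpow_const continuousOn_id
        (fun t ht => Or.inl (hbase t ht).1)
    · apply ContinuousOn.mul continuousOn_const
      exact ContinuousOn.rpow_const (Continuous.continuousOn (((continuous_const.mul continuous_id).sub continuous_const : Continuous (fun s : ℝ => h * s - ξ))))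
        (fun t ht => Or.inl (hbase t ht).2)
  -- dichotomy
  have hdich : ∀ t ∈ Icc aa bb, |φ2 t| ≤ T2 → T3 ≤ |φ3 t| := by
    intro t ht hb
    obtain ⟨h1, h2, h3, h4⟩ := hmemf t ht
    have habs2 : |φ2 t| = A * |K2| * |t ^ (α - 2) - h ^ 2 * (h * t - ξ) ^ (α - 2)| := by
      rw [hφ2_def]
      rw [abs_mul, abs_mul, abs_of_pos hA0]
    have habs3 : |φ3 t| = A * |K3| * |t ^ (α - 3) - h ^ 3 * (h * t - ξ) ^ (α - 3)| := by
      rw [hφ3_def]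
      rw [abs_mul, abs_mul, abs_of_pos hA0]
    rw [habs2, hT2eq] at hb
    have hQ23 : Q ^ 2 ≤ A * |ξ| := by
      rw [← hQcube]
      exact pow_le_pow_right₀ hQ1 (by norm_num)
    have hD2 : |t ^ (α - 2) - h ^ 2 * (h * t - ξ) ^ (α - 2)| ≤ |ξ| / (16 * P2) := by
      have hb' : |K2| * (A * |t ^ (α - 2) - h ^ 2 * (h * t - ξ) ^ (α - 2)|)
          ≤ |K2| * (Q ^ 2 / (16 * P2)) := by linarith [hb]
      have hstep1 : A * |t ^ (α - 2) - h ^ 2 * (h * t - ξ) ^ (α - 2)| ≤ Q ^ 2 / (16 * P2) :=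
        le_of_mul_le_mul_left hb' hK2abs
      have hs : A * |t ^ (α - 2) - h ^ 2 * (h * t - ξ) ^ (α - 2)| * (16 * P2) ≤ Q ^ 2 :=
        (le_div_iff₀ h16P2).mp hstep1
      have hs2 : A * (|t ^ (α - 2) - h ^ 2 * (h * t - ξ) ^ (α - 2)| * (16 * P2)) ≤ A * |ξ| := by
        linarith [hs, hQ23]
      have hs3 := le_of_mul_le_mul_left hs2 hA0
      rw [le_div_iff₀ h16P2]
      exact hs3
    have hD3 := dich_lemma (α := α) hh0 hh1 h1 h2 h3 h4 (by rw [← hP2_def]; exact hD2)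
    rw [habs3, hT3_def]
    rw [← hP2_def] at hD3
    calc |K3| * (A * |ξ|) / (8 * P2) = A * |K3| * (|ξ| / (8 * P2)) := by ring
      _ ≤ A * |K3| * |t ^ (α - 3) - h ^ 3 * (h * t - ξ) ^ (α - 3)| := by
          apply mul_le_mul_of_nonneg_left _ (mul_nonneg (le_of_lt hA0) (abs_nonneg _))
          exact hD3
  -- sign split for φ3
  have hmφ3 : ∃ m : ℝ,
      ((∀ t ∈ Icc aa bb, t ≤ m → 0 ≤ φ3 t) ∧ (∀ t ∈ Icc aa bb, m ≤ t → φ3 t ≤ 0)) ∨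
      ((∀ t ∈ Icc aa bb, t ≤ m → φ3 t ≤ 0) ∧ (∀ t ∈ Icc aa bb, m ≤ t → 0 ≤ φ3 t)) := by
    obtain ⟨m, hm⟩ := sign_split (α := α) hh0 hh1 hξ0 hab
      (fun t ht => hmemf t ht)
    refine ⟨m, ?_⟩
    have hAK : A * K3 ≠ 0 := mul_ne_zero (ne_of_gt hA0) hK3ne
    rcases lt_or_gt_of_ne hK3ne with hK3neg | hK3pos
    · have hAK3 : A * K3 ≤ 0 :=
        mul_nonpos_of_nonneg_of_nonpos' (le_of_lt hA0) (le_of_lt hK3neg)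
      rcases hm with ⟨hm1, hm2⟩ | ⟨hm1, hm2⟩
      · refine Or.inr ⟨?_, ?_⟩
        · intro t ht hle
          exact mul_nonpos_of_nonpos_of_nonneg' hAK3 (hm1 t ht hle)
        · intro t ht hle
          exact mul_nonneg_of_nonpos_nonpos' hAK3 (hm2 t ht hle)
      · refine Or.inl ⟨?_, ?_⟩
        · intro t ht hle
          exact mul_nonneg_of_nonpos_nonpos' hAK3 (hm1 t ht hle)
        · intro t ht hle
          exact mul_nonpos_of_nonpos_of_nonneg' hAK3 (hm2 t ht hle)
    · have hAK3 : 0 ≤ A * K3 := mul_nonneg (le_of_lt hA0) (le_of_lt hK3pos)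
      rcases hm with ⟨hm1, hm2⟩ | ⟨hm1, hm2⟩
      · refine Or.inl ⟨?_, ?_⟩
        · intro t ht hle
          exact mul_nonneg hAK3 (hm1 t ht hle)
        · intro t ht hle
          exact mul_nonpos_of_nonneg_of_nonpos' hAK3 (hm2 t ht hle)
      · refine Or.inr ⟨?_, ?_⟩
        · intro t ht hle
          exact mul_nonpos_of_nonneg_of_nonpos' hAK3 (hm1 t ht hle)
        · intro t ht hle
          exact mul_nonneg hAK3 (hm2 t ht hle)
  -- main estimate
  have hmain := vdc4 (φ := φ) (φ' := φ1) (φ'' := φ2) (φ''' := φ3) (a := amp) (a' := amp')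
    hab hσpos hT2pos hT3pos hMa0 hVa0 hd1 hd2 hd3 hφ1c hφ2c hφ3c
    (fun t _ => hampd t) hampc.continuousOn hamp'c.continuousOn
    (fun t _ => hampM t) (fun t _ => hampV t) hmφ3 hdich
  -- numeric conclusion
  have hσinv : σ⁻¹ ≤ c1 * ε := by
    rw [hσ_def, mul_inv, hc1_def]
    exact mul_le_mul_of_nonneg_left hQinv (le_of_lt (by rw [← hc1_def]; exact hc1pos))
  have hx1 : (4 * Ma + (bb - aa) * Va) / σ ≤ (4 * Ma + 2 * Va) * (c1 * ε) := by
    have hnum : 4 * Ma + (bb - aa) * Va ≤ 4 * Ma + 2 * Va := by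
      have := mul_le_mul_of_nonneg_right hlen hVa0
      linarith
    calc (4 * Ma + (bb - aa) * Va) / σ ≤ (4 * Ma + 2 * Va) / σ :=
          (div_le_div_iff_of_pos_right hσpos).mpr hnum
      _ = (4 * Ma + 2 * Va) * σ⁻¹ := by ring
      _ ≤ (4 * Ma + 2 * Va) * (c1 * ε) :=
          mul_le_mul_of_nonneg_left hσinv (by linarith)
  have hx2 : 2 * Ma * σ / T2 ≤ 2 * Ma * (c1 * ε) := by
    have he : 2 * Ma * σ / T2 = 2 * Ma * σ⁻¹ := by
      rw [hT2_def]
      field_simp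
    rw [he]
    exact mul_le_mul_of_nonneg_left hσinv (by linarith)
  have hx3 : 2 * Ma * T2 / T3 ≤ Ma * (c2 * ε) := by
    have he : T2 / T3 = c2 / 2 * Q⁻¹ := by
      rw [hT2eq, hT3_def, ← hQcube, hc2_def]
      field_simp
      ring
    have h2 : 2 * Ma * T2 / T3 = 2 * Ma * (T2 / T3) := by ring
    rw [h2, he]
    calc 2 * Ma * (c2 / 2 * Q⁻¹) = Ma * (c2 * Q⁻¹) := by ring
      _ ≤ Ma * (c2 * ε) := by
          apply mul_le_mul_of_nonneg_left _ hMa0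
          exact mul_le_mul_of_nonneg_left hQinv (le_of_lt hc2pos)
  have hfinal : 2 * (2 * (2 * ((4 * Ma + (bb - aa) * Va) / σ) + 2 * Ma * σ / T2)
      + 2 * Ma * T2 / T3) ≤ Cm * ε := by
    have hCmε : Cm * ε = 8 * ((4 * Ma + 2 * Va) * (c1 * ε)) + 4 * (2 * Ma * (c1 * ε))
        + 4 * (Ma * (c2 * ε)) := by
      rw [hCm_def]; ring
    have hx3' : (0:ℝ) ≤ Ma * (c2 * ε) :=
      mul_nonneg hMa0 (mul_nonneg (le_of_lt hc2pos) (le_of_lt hε0))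
    linarith
  calc ‖∫ t in aa..bb, G t‖ ≤ _ := hmain
    _ ≤ Cm * ε := hfinal
    _ ≤ (2 * Ma + Cm + 1) * (0 + ε * 1) := by
        rw [zero_add, mul_one]
        exact mul_le_mul_of_nonneg_right (by linarith) (le_of_lt hε0)
end

section
/- Let n∈ℤ, write ⟨n⟩ = 2+|n|, and let ω≥0 be locally integrable on ℝ. There is an absolute constant C such that for every λ>0 and every f∈L¹_loc(ℝ), ω({x∈ℝ : M^{(n)} f(x) > λ}) ≤ C λ^{−1} ( log⟨n⟩ ∫_ℝ |f(x)| M^{(−n)}ω(x) dx + ∫_ℝ |f(x)| Mω(x) dx ), where M denotes the Hardy–Littlewood maximal operator and ω(E)=∫_E ω. -/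
open MeasureTheory Set ENNReal

/-- The shifted dyadic maximal operator `M^{(n)} f(x) = sup_{x ∈ I ∈ 𝒟} |I|⁻¹ ∫_{I^{(n)}} |f|`,
where `𝒟` is the collection of dyadic intervals `I = [2^k m, 2^k(m+1))` and
`I^{(n)} = [2^k(m−n), 2^k(m−n+1))`. -/
noncomputable def shiftedMaximal (n : ℤ) (f : ℝ → ℝ) (x : ℝ) : ℝ≥0∞ :=
  ⨆ (k : ℤ) (m : ℤ)
    (_ : x ∈ Set.Ico ((2 : ℝ) ^ k * (m : ℝ)) ((2 : ℝ) ^ k * ((m : ℝ) + 1))),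
    ENNReal.ofReal (((2 : ℝ) ^ k)⁻¹ *
      ∫ y in Set.Ico ((2 : ℝ) ^ k * ((m : ℝ) - (n : ℝ)))
          ((2 : ℝ) ^ k * ((m : ℝ) - (n : ℝ) + 1)), |f y|)

/-- The Hardy–Littlewood maximal operator `Mf(x) = sup_{x ∈ I} |I|⁻¹ ∫_I |f|`, the supremum
being over all bounded intervals `I` containing `x`. -/
noncomputable def hlMaximal (f : ℝ → ℝ) (x : ℝ) : ℝ≥0∞ :=
  ⨆ (a : ℝ) (b : ℝ) (_ : a ≤ x) (_ : x ≤ b) (_ : a < b),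
    ENNReal.ofReal ((b - a)⁻¹ * ∫ y in Set.Icc a b, |f y|)

/-!
Fix `λ` and cap the scales at `K`. Whenever `I^{(n)}` is heavy (the average of `|f|` over it
exceeds `λ`), it lies in a maximal heavy dyadic interval `J`; these `J` are disjoint and
`λ|J| < ∫_J |f|`. If `|n||I| ≤ |J|`, then `I ⊆ 3J`, and `ω(3J) ≤ 3|J| Mω(y)` for all `y ∈ J`
gives `ω(3J) ≤ 3λ⁻¹ ∫_J |f| Mω`. Otherwise `|I|` is one of at most `log₂|n| + 1` scales below
`|J|`; at each of them `ω(I) ≤ |I| M^{(−n)}ω(y)` for `y ∈ I^{(n)}` and `λ|I| < ∫_{I^{(n)}} |f|`,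
and summing over the disjoint `I^{(n)} ⊆ J` costs `λ⁻¹ ∫_J |f| M^{(−n)}ω` per scale. Sum over
`J` and let `K → ∞`.
-/

open scoped Function

section

variable {α : Type*} [MeasurableSpace α] {μ : Measure α}

lemma ofReal_setIntegral_abs_eq {g : α → ℝ} {s : Set α} (hg : IntegrableOn g s μ) :
    ENNReal.ofReal (∫ y in s, |g y| ∂μ) = ∫⁻ y in s, ‖g y‖ₑ ∂μ :=
  ofReal_integral_norm_eq_lintegral_enorm hg

lemma le_inv_mul_setLIntegral_of_le_mul {S : Set α} (hS : MeasurableSet S) {F G : α → ℝ≥0∞}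
    {c t W : ℝ≥0∞} (hc0 : c ≠ 0) (hc : c ≠ ∞) (ht0 : t ≠ 0) (ht : t ≠ ∞)
    (hF : c * t ≤ ∫⁻ y in S, F y ∂μ) (hW : ∀ y ∈ S, W ≤ t * G y) :
    W ≤ c⁻¹ * ∫⁻ y in S, F y * G y ∂μ := by
  rw [← ENNReal.mul_le_iff_le_inv hc0 hc, ← ENNReal.mul_le_mul_iff_right ht0 ht]
  calc t * (c * W) = W * (c * t) := by ring
    _ ≤ W * ∫⁻ y in S, F y ∂μ := by gcongr
    _ ≤ ∫⁻ y in S, W * F y ∂μ := lintegral_const_mul_le _ _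
    _ ≤ ∫⁻ y in S, t * (F y * G y) ∂μ := setLIntegral_mono' hS fun y hy ↦ by
        rw [mul_left_comm, mul_comm]
        gcongr
        exact hW y hy
    _ = t * ∫⁻ y in S, F y * G y ∂μ := lintegral_const_mul' _ _ ht

end

namespace ShiftedDyadic

/-- `dyadic k (m - n)` is the shifted interval `I^{(n)}` of `I = dyadic k m`. -/
def dyadic (k m : ℤ) : Set ℝ := Ico ((2 : ℝ) ^ k * m) ((2 : ℝ) ^ k * (m + 1))

variable {k k' m m' : ℤ} {x : ℝ}

lemma mem_dyadic_iff : x ∈ dyadic k m ↔ ⌊x / 2 ^ k⌋ = m := by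
  have h : (0 : ℝ) < 2 ^ k := by positivity
  rw [dyadic, mem_Ico, Int.floor_eq_iff, le_div_iff₀ h, div_lt_iff₀ h, mul_comm (m : ℝ),
    mul_comm ((m : ℝ) + 1)]

lemma measurableSet_dyadic : MeasurableSet (dyadic k m) := measurableSet_Ico

lemma pairwise_disjoint_dyadic (k : ℤ) : Pairwise (Disjoint on dyadic k) := fun _ _ h ↦
  disjoint_left.2 fun _ hx hx' ↦ h ((mem_dyadic_iff.1 hx).symm.trans (mem_dyadic_iff.1 hx'))

lemma two_zpow_eq_mul_pow_toNat (hk : k ≤ k') : (2 : ℝ) ^ k' = 2 ^ k * 2 ^ (k' - k).toNat := by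
  rw [← zpow_natCast, ← zpow_add₀ two_ne_zero]
  congr 1
  omega

lemma floor_div_two_zpow_of_le (hk : k ≤ k') (x : ℝ) :
    ⌊x / 2 ^ k'⌋ = ⌊x / 2 ^ k⌋ / 2 ^ (k' - k).toNat := by
  rw [two_zpow_eq_mul_pow_toNat hk, ← div_div, ← Nat.cast_ofNat, ← Nat.cast_pow,
    Int.floor_div_natCast]
  norm_cast

lemma dyadic_subset_of_le (hk : k ≤ k') (hx : x ∈ dyadic k m) (hx' : x ∈ dyadic k' m') :
    dyadic k m ⊆ dyadic k' m' := by
  intro y hy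
  rw [mem_dyadic_iff] at hx hx' hy ⊢
  rw [floor_div_two_zpow_of_le hk] at hx' ⊢
  rw [hy, ← hx, hx']

section StoppingTime

variable (P : ℤ → ℤ → Prop) (K : ℤ)

/-- An increasing chain of dyadic intervals with property `P` need not have a largest member,
hence the cap `K` on the scale. -/
def maximalDyadic : Set (ℤ × ℤ) :=
  {p | p.1 ≤ K ∧ P p.1 p.2 ∧
    ∀ k' m', p.1 < k' → k' ≤ K → dyadic p.1 p.2 ⊆ dyadic k' m' → ¬ P k' m'}

variable {P K}

lemma exists_maximalDyadic (hk : k ≤ K) (hP : P k m) :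
    ∃ p ∈ maximalDyadic P K, k ≤ p.1 ∧ dyadic k m ⊆ dyadic p.1 p.2 := by
  set x : ℝ := (2 : ℝ) ^ k * m
  have hx : x ∈ dyadic k m := mem_dyadic_iff.2 (by
    rw [mul_div_cancel_left₀ _ (by positivity), Int.floor_intCast])
  obtain ⟨j, ⟨hkj, hjK, hPj⟩, hmax⟩ :=
    Int.exists_greatest_of_bdd (P := fun j ↦ k ≤ j ∧ j ≤ K ∧ P j ⌊x / 2 ^ j⌋)
      ⟨K, fun _ hj ↦ hj.2.1⟩ ⟨k, le_rfl, hk, by rwa [mem_dyadic_iff.1 hx]⟩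
  have hxj : x ∈ dyadic j ⌊x / 2 ^ j⌋ := mem_dyadic_iff.2 rfl
  refine ⟨(j, _), ⟨hjK, hPj, fun k' m' hjk' hk'K hsub hP' ↦ ?_⟩, hkj,
    dyadic_subset_of_le hkj hx hxj⟩
  have hm' : ⌊x / 2 ^ k'⌋ = m' := mem_dyadic_iff.1 (hsub hxj)
  exact (hmax k' ⟨hkj.trans hjk'.le, hk'K, hm' ▸ hP'⟩).not_gt hjk'

lemma pairwiseDisjoint_maximalDyadic :
    (maximalDyadic P K).PairwiseDisjoint fun p ↦ dyadic p.1 p.2 := by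
  intro p hp q hq hpq
  refine disjoint_left.2 fun x hxp hxq ↦ ?_
  rcases lt_trichotomy p.1 q.1 with h | h | h
  · exact hp.2.2 q.1 q.2 h hq.1 (dyadic_subset_of_le h.le hxp hxq) hq.2.1
  · exact hpq (Prod.ext h ((mem_dyadic_iff.1 hxp).symm.trans (h ▸ mem_dyadic_iff.1 hxq)))
  · exact hq.2.2 p.1 p.2 h hp.1 (dyadic_subset_of_le h.le hxq hxp) hp.2.1

lemma tsum_setLIntegral_maximalDyadic_le (g : ℝ → ℝ≥0∞) :
    ∑' p : maximalDyadic P K, ∫⁻ y in dyadic p.1.1 p.1.2, g y ≤ ∫⁻ y, g y := by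
  rw [← lintegral_biUnion (to_countable _) (fun _ _ ↦ measurableSet_dyadic)
    pairwiseDisjoint_maximalDyadic]
  exact setLIntegral_le_lintegral _ _

end StoppingTime

section MaximalFunctions

variable {g : ℝ → ℝ}

lemma shiftedMaximal_eq_iSup (n : ℤ) (hg : LocallyIntegrable g) (x : ℝ) :
    shiftedMaximal n g x = ⨆ (k : ℤ) (m : ℤ) (_ : x ∈ dyadic k m),
      (ENNReal.ofReal (2 ^ k))⁻¹ * ∫⁻ y in dyadic k (m - n), ‖g y‖ₑ := by
  refine iSup_congr fun k ↦ iSup_congr fun m ↦ iSup_congr fun _ ↦ ?_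
  have hint : IntegrableOn g (dyadic k (m - n)) :=
    (hg.integrableOn_isCompact isCompact_Icc).mono_set Ico_subset_Icc_self
  rw [ofReal_mul (by positivity), ofReal_inv_of_pos (by positivity),
    ← ofReal_setIntegral_abs_eq hint, dyadic]
  push_cast
  rfl

lemma lintegral_dyadic_le_shiftedMaximal (n : ℤ) (hg : LocallyIntegrable g) {y : ℝ}
    (hy : y ∈ dyadic k m) :
    ∫⁻ z in dyadic k (m - n), ‖g z‖ₑ ≤ ENNReal.ofReal (2 ^ k) * shiftedMaximal n g y := by
  rw [← ENNReal.mul_inv_cancel_left (a := ENNReal.ofReal (2 ^ k)) (by positivity) ofReal_ne_top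
    (b := ∫⁻ z in dyadic k (m - n), ‖g z‖ₑ), shiftedMaximal_eq_iSup n hg]
  gcongr
  exact le_iSup₂_of_le k m (le_iSup_of_le hy le_rfl)

lemma lintegral_Icc_le_hlMaximal (hg : LocallyIntegrable g) {a b y : ℝ} (hay : a ≤ y)
    (hyb : y ≤ b) (hab : a < b) :
    ∫⁻ z in Icc a b, ‖g z‖ₑ ≤ ENNReal.ofReal (b - a) * hlMaximal g y := by
  have hba : 0 < b - a := sub_pos.2 hab
  calc ∫⁻ z in Icc a b, ‖g z‖ₑ
      = ENNReal.ofReal (b - a) * ENNReal.ofReal ((b - a)⁻¹ * ∫ z in Icc a b, |g z|) := by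
        rw [← ofReal_mul hba.le, ← mul_assoc, mul_inv_cancel₀ hba.ne', one_mul,
          ofReal_setIntegral_abs_eq (hg.integrableOn_isCompact isCompact_Icc)]
    _ ≤ ENNReal.ofReal (b - a) * hlMaximal g y := by
        gcongr
        exact le_iSup₂_of_le a b (le_iSup₂_of_le hay hyb (le_iSup_of_le hab le_rfl))

end MaximalFunctions

noncomputable def weightMeasure (ω : ℝ → ℝ) : Measure ℝ :=
  volume.withDensity fun x ↦ ENNReal.ofReal (ω x)

lemma weightMeasure_le_lintegral_enorm (ω : ℝ → ℝ) (s : Set ℝ) :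
    weightMeasure ω s ≤ ∫⁻ x in s, ‖ω x‖ₑ := by
  rw [weightMeasure, withDensity_apply' _ s]
  exact lintegral_mono fun x ↦ Real.ofReal_le_enorm (ω x)

def Heavy (f : ℝ → ℝ) (c : ℝ≥0∞) (k m : ℤ) : Prop :=
  c * ENNReal.ofReal (2 ^ k) < ∫⁻ y in dyadic k m, ‖f y‖ₑ

def truncLevelSet (f : ℝ → ℝ) (c : ℝ≥0∞) (n K : ℤ) : Set ℝ :=
  ⋃ (k : ℤ) (m : ℤ) (_ : k ≤ K ∧ Heavy f c k (m - n)), dyadic k m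

section LevelSet

variable {f : ℝ → ℝ} {c : ℝ≥0∞} {n : ℤ}

lemma lt_shiftedMaximal_iff (hf : LocallyIntegrable f) {x : ℝ} :
    c < shiftedMaximal n f x ↔ ∃ k m, x ∈ dyadic k m ∧ Heavy f c k (m - n) := by
  simp only [shiftedMaximal_eq_iSup n hf, lt_iSup_iff, exists_prop, Heavy]
  refine exists₂_congr fun k m ↦ and_congr_right fun _ ↦ ?_
  rw [← ENNReal.div_eq_inv_mul,
    ENNReal.lt_div_iff_mul_lt (Or.inl (by positivity)) (Or.inl ofReal_ne_top)]

lemma setOf_lt_shiftedMaximal_eq_iUnion (hf : LocallyIntegrable f) :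
    {x | c < shiftedMaximal n f x} = ⋃ K : ℤ, truncLevelSet f c n K := by
  ext x
  simp only [mem_ofPred_eq, lt_shiftedMaximal_iff hf, truncLevelSet, mem_iUnion, exists_prop]
  exact ⟨fun ⟨k, m, hx, hP⟩ ↦ ⟨k, k, m, ⟨le_rfl, hP⟩, hx⟩,
    fun ⟨_, k, m, ⟨_, hP⟩, hx⟩ ↦ ⟨k, m, hx, hP⟩⟩

lemma monotone_truncLevelSet : Monotone (truncLevelSet f c n) := by
  intro K K' hK
  exact iUnion₂_mono fun k m ↦ iUnion_subset fun h ↦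
    subset_iUnion_of_subset ⟨h.1.trans hK, h.2⟩ le_rfl

end LevelSet

def tripleDyadic (k m : ℤ) : Set ℝ := Icc ((2 : ℝ) ^ k * (m - 1)) ((2 : ℝ) ^ k * (m + 2))

def shiftedHeavy (f : ℝ → ℝ) (c : ℝ≥0∞) (n j k m : ℤ) : Set ℝ :=
  ⋃ i ∈ {i : ℤ | Heavy f c j (i - n) ∧ dyadic j (i - n) ⊆ dyadic k m}, dyadic j i

def logScales (n : ℤ) : ℕ := Nat.log 2 n.natAbs + 1

def enlargement (f : ℝ → ℝ) (c : ℝ≥0∞) (n k m : ℤ) : Set ℝ :=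
  tripleDyadic k m ∪ ⋃ d : Fin (logScales n), shiftedHeavy f c n (k - d) k m

section Covering

variable {f : ℝ → ℝ} {c : ℝ≥0∞} {n : ℤ}

lemma dyadic_subset_tripleDyadic (hsub : dyadic k (m - n) ⊆ dyadic k' m')
    (hn : n.natAbs * (2 : ℝ) ^ k ≤ 2 ^ k') : dyadic k m ⊆ tripleDyadic k' m' := by
  have hk : (0 : ℝ) < 2 ^ k := by positivity
  rw [Nat.cast_natAbs, Int.cast_abs] at hn
  obtain ⟨h1, h2⟩ := (Ico_subset_Ico_iff (by push_cast; nlinarith)).1 hsub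
  push_cast at h1 h2
  have hn₁ := mul_le_mul_of_nonneg_right (neg_abs_le (n : ℝ)) hk.le
  have hn₂ := mul_le_mul_of_nonneg_right (le_abs_self (n : ℝ)) hk.le
  rintro y ⟨hy1, hy2⟩
  constructor <;> nlinarith

lemma toNat_sub_lt_logScales (hk : k ≤ k') (h : (2 : ℝ) ^ k' < n.natAbs * 2 ^ k) :
    (k' - k).toNat < logScales n := by
  rw [two_zpow_eq_mul_pow_toNat hk, mul_comm] at h
  have hlt : 2 ^ (k' - k).toNat < n.natAbs := by
    exact_mod_cast lt_of_mul_lt_mul_right h (by positivity)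
  exact Nat.lt_succ_of_le (Nat.le_log_of_pow_le one_lt_two hlt.le)

/-- If `I^{(n)} ⊆ J` is heavy, either `|n||I| ≤ |J|` and the shift keeps `I` inside `3J`, or
`|J| < |n||I|`, which leaves fewer than `logScales n` possible scales for `I`. -/
lemma truncLevelSet_subset (K : ℤ) :
    truncLevelSet f c n K ⊆ ⋃ p ∈ maximalDyadic (Heavy f c) K, enlargement f c n p.1 p.2 := by
  simp only [truncLevelSet, iUnion_subset_iff]
  rintro k m ⟨hkK, hheavy⟩ x hx
  obtain ⟨p, hp, hkp, hsub⟩ := exists_maximalDyadic hkK hheavy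
  refine mem_biUnion hp ?_
  rcases le_or_gt (n.natAbs * (2 : ℝ) ^ k) (2 ^ p.1) with hclose | hfar
  · exact Or.inl (dyadic_subset_tripleDyadic hsub hclose hx)
  · refine Or.inr (mem_iUnion.2 ⟨⟨_, toNat_sub_lt_logScales hkp hfar⟩, ?_⟩)
    have hk : p.1 - ((p.1 - k).toNat : ℤ) = k := by omega
    rw [shiftedHeavy, hk]
    exact mem_biUnion (x := m) ⟨hheavy, hsub⟩ hx

end Covering

section Estimates

variable {f ω : ℝ → ℝ} {c : ℝ≥0∞} {n : ℤ}

lemma weightMeasure_dyadic_le (hω : LocallyIntegrable ω) (hc0 : c ≠ 0) (hc : c ≠ ∞)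
    (hheavy : Heavy f c k (m - n)) :
    weightMeasure ω (dyadic k m) ≤
      c⁻¹ * ∫⁻ y in dyadic k (m - n), ‖f y‖ₑ * shiftedMaximal (-n) ω y := by
  refine le_inv_mul_setLIntegral_of_le_mul measurableSet_dyadic hc0 hc (by positivity)
    ofReal_ne_top hheavy.le fun y hy ↦ ?_
  calc weightMeasure ω (dyadic k m)
      ≤ ∫⁻ z in dyadic k (m - n - -n), ‖ω z‖ₑ := by
        rw [sub_neg_eq_add, sub_add_cancel]
        exact weightMeasure_le_lintegral_enorm ω _
    _ ≤ _ := lintegral_dyadic_le_shiftedMaximal (-n) hω hy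

lemma weightMeasure_tripleDyadic_le (hω : LocallyIntegrable ω) (hc0 : c ≠ 0) (hc : c ≠ ∞)
    (hheavy : Heavy f c k m) :
    weightMeasure ω (tripleDyadic k m) ≤
      3 * c⁻¹ * ∫⁻ y in dyadic k m, ‖f y‖ₑ * hlMaximal ω y := by
  have hk : (0 : ℝ) < 2 ^ k := by positivity
  have hW : ∀ y ∈ dyadic k m,
      weightMeasure ω (tripleDyadic k m) ≤ ENNReal.ofReal (2 ^ k) * (3 * hlMaximal ω y) := by
    rintro y ⟨hy1, hy2⟩
    calc weightMeasure ω (tripleDyadic k m)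
        ≤ ∫⁻ z in tripleDyadic k m, ‖ω z‖ₑ := weightMeasure_le_lintegral_enorm ω _
      _ ≤ ENNReal.ofReal (2 ^ k * (m + 2) - 2 ^ k * (m - 1)) * hlMaximal ω y :=
        lintegral_Icc_le_hlMaximal hω (by linarith) (by linarith) (by linarith)
      _ = ENNReal.ofReal (2 ^ k) * (3 * hlMaximal ω y) := by
        rw [show (2 : ℝ) ^ k * (m + 2) - 2 ^ k * (m - 1) = 3 * 2 ^ k by ring,
          ofReal_mul zero_le_three, ofReal_ofNat, mul_assoc, mul_left_comm]
  have h := le_inv_mul_setLIntegral_of_le_mul measurableSet_dyadic hc0 hc (by positivity)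
    ofReal_ne_top hheavy.le hW
  simp_rw [mul_left_comm _ (3 : ℝ≥0∞)] at h
  rwa [lintegral_const_mul' _ _ ofNat_ne_top, mul_left_comm, ← mul_assoc] at h

lemma weightMeasure_shiftedHeavy_le (hω : LocallyIntegrable ω) (hc0 : c ≠ 0) (hc : c ≠ ∞)
    (j : ℤ) :
    weightMeasure ω (shiftedHeavy f c n j k m) ≤
      c⁻¹ * ∫⁻ y in dyadic k m, ‖f y‖ₑ * shiftedMaximal (-n) ω y := by
  set T := {i : ℤ | Heavy f c j (i - n) ∧ dyadic j (i - n) ⊆ dyadic k m}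
  have hdisj : Pairwise (Disjoint on fun i : T ↦ dyadic j (i - n)) :=
    (pairwise_disjoint_dyadic j).comp_of_injective
      ((sub_left_injective (b := n)).comp Subtype.val_injective)
  calc weightMeasure ω (shiftedHeavy f c n j k m)
      ≤ ∑' i : T, weightMeasure ω (dyadic j i) := measure_biUnion_le _ (to_countable T) _
    _ ≤ ∑' i : T, c⁻¹ * ∫⁻ y in dyadic j (i - n), ‖f y‖ₑ * shiftedMaximal (-n) ω y :=
        ENNReal.tsum_le_tsum fun i ↦ weightMeasure_dyadic_le hω hc0 hc i.2.1
    _ = c⁻¹ * ∫⁻ y in ⋃ i : T, dyadic j (i - n), ‖f y‖ₑ * shiftedMaximal (-n) ω y := by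
        rw [ENNReal.tsum_mul_left, lintegral_iUnion (fun _ ↦ measurableSet_dyadic) hdisj]
    _ ≤ c⁻¹ * ∫⁻ y in dyadic k m, ‖f y‖ₑ * shiftedMaximal (-n) ω y := by
        gcongr
        exact iUnion_subset fun i ↦ i.2.2

end Estimates

section Assembly

variable {f ω : ℝ → ℝ} {c : ℝ≥0∞} {n : ℤ}

lemma weightMeasure_enlargement_le (hω : LocallyIntegrable ω) (hc0 : c ≠ 0) (hc : c ≠ ∞)
    (hheavy : Heavy f c k m) :
    weightMeasure ω (enlargement f c n k m) ≤
      c⁻¹ * (3 * (∫⁻ y in dyadic k m, ‖f y‖ₑ * hlMaximal ω y) +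
        logScales n * ∫⁻ y in dyadic k m, ‖f y‖ₑ * shiftedMaximal (-n) ω y) := by
  calc weightMeasure ω (enlargement f c n k m)
      ≤ weightMeasure ω (tripleDyadic k m) +
          ∑ d : Fin (logScales n), weightMeasure ω (shiftedHeavy f c n (k - d) k m) :=
        (measure_union_le _ _).trans (add_le_add_right (measure_iUnion_fintype_le _ _) _)
    _ ≤ 3 * c⁻¹ * (∫⁻ y in dyadic k m, ‖f y‖ₑ * hlMaximal ω y) +
          ∑ _d : Fin (logScales n),
            c⁻¹ * ∫⁻ y in dyadic k m, ‖f y‖ₑ * shiftedMaximal (-n) ω y := by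
        gcongr with d
        · exact weightMeasure_tripleDyadic_le hω hc0 hc hheavy
        · exact weightMeasure_shiftedHeavy_le hω hc0 hc _
    _ = _ := by
        rw [Finset.sum_const, Finset.card_univ, Fintype.card_fin, nsmul_eq_mul]
        ring

lemma weightMeasure_truncLevelSet_le (hω : LocallyIntegrable ω) (hc0 : c ≠ 0) (hc : c ≠ ∞)
    (K : ℤ) :
    weightMeasure ω (truncLevelSet f c n K) ≤
      c⁻¹ * (3 * (∫⁻ y, ‖f y‖ₑ * hlMaximal ω y) +
        logScales n * ∫⁻ y, ‖f y‖ₑ * shiftedMaximal (-n) ω y) := by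
  calc weightMeasure ω (truncLevelSet f c n K)
      ≤ weightMeasure ω (⋃ p ∈ maximalDyadic (Heavy f c) K, enlargement f c n p.1 p.2) :=
        measure_mono (truncLevelSet_subset K)
    _ ≤ ∑' p : maximalDyadic (Heavy f c) K, weightMeasure ω (enlargement f c n p.1.1 p.1.2) :=
        measure_biUnion_le _ (to_countable _) _
    _ ≤ ∑' p : maximalDyadic (Heavy f c) K,
          c⁻¹ * (3 * (∫⁻ y in dyadic p.1.1 p.1.2, ‖f y‖ₑ * hlMaximal ω y) +
            logScales n * ∫⁻ y in dyadic p.1.1 p.1.2, ‖f y‖ₑ * shiftedMaximal (-n) ω y) :=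
        ENNReal.tsum_le_tsum fun p ↦ weightMeasure_enlargement_le hω hc0 hc p.2.2.1
    _ = c⁻¹ * (3 * ∑' p : maximalDyadic (Heavy f c) K,
            (∫⁻ y in dyadic p.1.1 p.1.2, ‖f y‖ₑ * hlMaximal ω y) +
          logScales n * ∑' p : maximalDyadic (Heavy f c) K,
            ∫⁻ y in dyadic p.1.1 p.1.2, ‖f y‖ₑ * shiftedMaximal (-n) ω y) := by
        rw [ENNReal.tsum_mul_left, ENNReal.tsum_add, ENNReal.tsum_mul_left, ENNReal.tsum_mul_left]
    _ ≤ _ := by gcongr <;> exact tsum_setLIntegral_maximalDyadic_le _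

end Assembly

/-- `(log₂|n| + 1) log 2 ≤ 2 log(2 + |n|)` and `log 2 > 2/3`. -/
lemma logScales_le (n : ℤ) :
    (logScales n : ℝ≥0∞) ≤ 3 * ENNReal.ofReal (Real.log (2 + |(n : ℝ)|)) := by
  rw [← ofReal_natCast, ← ofReal_ofNat 3, ← ofReal_mul zero_le_three]
  refine ofReal_le_ofReal ?_
  set N := n.natAbs
  have hN : |(n : ℝ)| = N := by rw [Nat.cast_natAbs, Int.cast_abs]
  have hpow : (2 : ℝ) ^ Nat.log 2 N ≤ 2 + N := by
    exact_mod_cast (Nat.pow_log_le_add_one 2 N).trans (by omega)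
  have h1 : (Nat.log 2 N : ℝ) * Real.log 2 ≤ Real.log (2 + N) := by
    rw [← Real.log_pow]
    exact Real.log_le_log (by positivity) hpow
  have h2 : Real.log 2 ≤ Real.log (2 + N) :=
    Real.log_le_log two_pos (le_add_of_nonneg_right N.cast_nonneg)
  have := Real.log_two_gt_d9
  rw [logScales, hN]
  push_cast
  nlinarith

end ShiftedDyadic

open ShiftedDyadic in
/-- Fefferman–Stein type weighted weak-(1,1) estimate for the shifted
dyadic maximal operator: there is an absolute constant `C` such that for every `n ∈ ℤ`,
every locally integrable weight `ω ≥ 0`, every `f ∈ L¹_loc` and every `λ > 0`,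
`ω({M^{(n)}f > λ}) ≤ C λ⁻¹ (log⟨n⟩ ∫|f| M^{(−n)}ω + ∫|f| Mω)`, with `⟨n⟩ = 2 + |n|`. -/
theorem statement11 :
    ∃ C : ℝ, 0 < C ∧
      ∀ (n : ℤ) (ω : ℝ → ℝ), (∀ x, 0 ≤ ω x) → LocallyIntegrable ω volume →
        ∀ f : ℝ → ℝ, LocallyIntegrable f volume →
          ∀ lam : ℝ, 0 < lam →
            (∫⁻ x in {x : ℝ | ENNReal.ofReal lam < shiftedMaximal n f x},
                ENNReal.ofReal (ω x)) ≤
              ENNReal.ofReal (C / lam) *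
                (ENNReal.ofReal (Real.log (2 + |(n : ℝ)|)) *
                    (∫⁻ x : ℝ, (‖f x‖₊ : ℝ≥0∞) * shiftedMaximal (-n) ω x) +
                  ∫⁻ x : ℝ, (‖f x‖₊ : ℝ≥0∞) * hlMaximal ω x) := by
  refine ⟨3, three_pos, fun n ω _ hω f hf lam hlam ↦ ?_⟩
  calc ∫⁻ x in {x | ENNReal.ofReal lam < shiftedMaximal n f x}, ENNReal.ofReal (ω x)
      = weightMeasure ω (⋃ K : ℤ, truncLevelSet f (ENNReal.ofReal lam) n K) := by
        rw [weightMeasure, withDensity_apply', setOf_lt_shiftedMaximal_eq_iUnion hf]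
    _ = ⨆ K : ℤ, weightMeasure ω (truncLevelSet f (ENNReal.ofReal lam) n K) :=
        monotone_truncLevelSet.measure_iUnion
    _ ≤ (ENNReal.ofReal lam)⁻¹ * (3 * (∫⁻ x, ‖f x‖ₑ * hlMaximal ω x) +
          logScales n * ∫⁻ x, ‖f x‖ₑ * shiftedMaximal (-n) ω x) :=
        iSup_le fun K ↦ weightMeasure_truncLevelSet_le hω (ofReal_pos.2 hlam).ne' ofReal_ne_top K
    _ ≤ (ENNReal.ofReal lam)⁻¹ * (3 * (∫⁻ x, ‖f x‖ₑ * hlMaximal ω x) +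
          3 * ENNReal.ofReal (Real.log (2 + |(n : ℝ)|)) *
            ∫⁻ x, ‖f x‖ₑ * shiftedMaximal (-n) ω x) := by gcongr; exact logScales_le n
    _ = _ := by
        rw [ofReal_div_of_pos hlam, ofReal_ofNat, ENNReal.div_eq_inv_mul]
        simp only [enorm_eq_nnnorm]
        ring
end
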